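/- arXiv:2503.13756 — 8 statements merged into one kernel-verified Lean document; each statement's English description precedes it below -/
import Mathlib

section
/- Let f be a probability density on ℝ² supported on the unit disk, let s ∈ ℝ², and let g = T_s f be its translate, g(x) = f(x − s) (so g is also a probability density, supported in a disk of radius 1 about s). Then for every p ≥ 1, the sliced p-Wasserstein distance satisfies d_{SWp}(f, g) = (Γ((p+1)/2) / (√π · Γ(p/2 + 1)))^{1/p} · ‖s‖, i.e. d_{SWp}^p(f, g) = (Γ((p+1)/2)/(√π Γ(p/2+1))) ‖s‖^p. -/
/-! The projection of the translate `f(· - s)` at angle `θ` is the projection of `f` translated by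
`⟪s, (cos θ, sin θ)⟫`, and a 1-D translation by `c` shifts every quantile by `c`, so the
Wasserstein cost at angle `θ` is `|s₁ cos θ + s₂ sin θ| ^ p = ‖s‖ ^ p |cos (θ - φ)| ^ p`
with `φ = arg s`.
The average of `|cos| ^ p` over a period is read off by integrating `|x₁| ^ p e^{-‖x‖²}` over the
plane twice, in Cartesian and in polar coordinates. -/

open MeasureTheory Real Set

/-- CDF of a density `μ` on `ℝ`: `F_μ(t) = ∫_{-∞}^t μ`. -/
noncomputable def cdfOf (μ : ℝ → ℝ) (t : ℝ) : ℝ := ∫ x in Set.Iic t, μ x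

/-- Quantile function `Q_μ(z) = inf {t : F_μ(t) ≥ z}`. -/
noncomputable def quantileOf (μ : ℝ → ℝ) (z : ℝ) : ℝ := sInf {t : ℝ | z ≤ cdfOf μ t}

/-- `d_{Wp}^p(μ, ν) = ∫₀¹ |Q_μ(z) − Q_ν(z)|^p dz`. -/
noncomputable def wassersteinPow (p : ℝ) (μ ν : ℝ → ℝ) : ℝ :=
  ∫ z in Set.Ioo (0:ℝ) 1, |quantileOf μ z - quantileOf ν z| ^ p

/-- 1-D `p`-Wasserstein distance between densities. -/
noncomputable def wasserstein (p : ℝ) (μ ν : ℝ → ℝ) : ℝ :=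
  (wassersteinPow p μ ν) ^ (1 / p)

/-- Line projection of an image `f : ℝ² → ℝ` at angle `θ`:
`P_θ f(s) = ∫ f(s(cos θ, sin θ) + t(−sin θ, cos θ)) dt`. -/
noncomputable def lineProj (f : ℝ × ℝ → ℝ) (θ : ℝ) (s : ℝ) : ℝ :=
  ∫ t : ℝ, f (s * Real.cos θ - t * Real.sin θ, s * Real.sin θ + t * Real.cos θ)

/-- `d_{SWp}^p(f, g) = (1/2π) ∫₀^{2π} d_{Wp}^p(P_θ f, P_θ g) dθ`. -/
noncomputable def slicedWassersteinPow (p : ℝ) (f g : ℝ × ℝ → ℝ) : ℝ :=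
  (1 / (2 * Real.pi)) * ∫ θ in Set.Ioo (0:ℝ) (2 * Real.pi),
    wassersteinPow p (lineProj f θ) (lineProj g θ)

/-- Sliced `p`-Wasserstein distance between two images. -/
noncomputable def slicedWasserstein (p : ℝ) (f g : ℝ × ℝ → ℝ) : ℝ :=
  (slicedWassersteinPow p f g) ^ (1 / p)

/-- Rotation of an image by angle `α`: `(R_α g)(x) = g(R_α⁻¹ x)`. -/
noncomputable def rotImage (α : ℝ) (g : ℝ × ℝ → ℝ) : ℝ × ℝ → ℝ :=
  fun x => g (x.1 * Real.cos α + x.2 * Real.sin α, -x.1 * Real.sin α + x.2 * Real.cos α)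

noncomputable def planeRotation (θ : ℝ) : (ℝ × ℝ) ≃ₗ[ℝ] ℝ × ℝ where
  toFun x := (x.1 * cos θ - x.2 * sin θ, x.1 * sin θ + x.2 * cos θ)
  invFun x := (x.1 * cos θ + x.2 * sin θ, -x.1 * sin θ + x.2 * cos θ)
  map_add' x y := by ext <;> simp only [Prod.fst_add, Prod.snd_add] <;> ring
  map_smul' c x := by
    ext <;> simp only [Prod.smul_fst, Prod.smul_snd, smul_eq_mul, RingHom.id_apply] <;> ring
  left_inv x := by
    ext
    · linear_combination x.1 * sin_sq_add_cos_sq θ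
    · linear_combination x.2 * sin_sq_add_cos_sq θ
  right_inv x := by
    ext
    · linear_combination x.1 * sin_sq_add_cos_sq θ
    · linear_combination x.2 * sin_sq_add_cos_sq θ

lemma planeRotation_apply (θ : ℝ) (x : ℝ × ℝ) :
    planeRotation θ x = (x.1 * cos θ - x.2 * sin θ, x.1 * sin θ + x.2 * cos θ) := rfl

lemma det_planeRotation (θ : ℝ) :
    LinearMap.det (planeRotation θ : (ℝ × ℝ) →ₗ[ℝ] ℝ × ℝ) = 1 := by
  rw [← LinearMap.det_toMatrix (Module.Basis.finTwoProd ℝ), Matrix.det_fin_two]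
  simp only [LinearMap.toMatrix_apply, Module.Basis.finTwoProd_zero, Module.Basis.finTwoProd_one,
    Module.Basis.coe_finTwoProd_repr, LinearEquiv.coe_coe, planeRotation_apply,
    Matrix.cons_val_zero, Matrix.cons_val_one, Matrix.cons_val_fin_one, one_mul, zero_mul, sub_zero, add_zero, zero_sub,
    zero_add]
  linear_combination sin_sq_add_cos_sq θ

lemma measurePreserving_planeRotation (θ : ℝ) :
    MeasurePreserving (planeRotation θ) volume volume := by
  have hdet : LinearMap.det (planeRotation θ : (ℝ × ℝ) →ₗ[ℝ] ℝ × ℝ) ≠ 0 := by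
    rw [det_planeRotation]
    exact one_ne_zero
  refine ⟨(planeRotation θ).toContinuousLinearEquiv.continuous.measurable, ?_⟩
  simpa [det_planeRotation] using Measure.map_linearMap_addHaar_eq_smul_addHaar volume hdet

lemma measurableEmbedding_planeRotation (θ : ℝ) : MeasurableEmbedding (planeRotation θ) :=
  (planeRotation θ).toContinuousLinearEquiv.toHomeomorph.measurableEmbedding

section LineProjection

variable {f : ℝ × ℝ → ℝ}

lemma lineProj_eq_integral_planeRotation (f : ℝ × ℝ → ℝ) (θ r : ℝ) :
    lineProj f θ r = ∫ t, f (planeRotation θ (r, t)) := rfl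

lemma integrable_comp_planeRotation (hf : Integrable f) (θ : ℝ) :
    Integrable (fun x => f (planeRotation θ x)) (volume.prod volume) := by
  rw [← Measure.volume_eq_prod]
  exact ((measurePreserving_planeRotation θ).integrable_comp_emb
    (measurableEmbedding_planeRotation θ)).mpr hf

lemma integrable_lineProj (hf : Integrable f) (θ : ℝ) : Integrable (lineProj f θ) :=
  (integrable_comp_planeRotation hf θ).integral_prod_left

lemma integral_lineProj (hf : Integrable f) (θ : ℝ) :
    ∫ r, lineProj f θ r = ∫ x, f x := by
  simp only [lineProj_eq_integral_planeRotation]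
  rw [← integral_prod _ (integrable_comp_planeRotation hf θ), ← Measure.volume_eq_prod,
    (measurePreserving_planeRotation θ).integral_comp (measurableEmbedding_planeRotation θ)]

lemma lineProj_eq_zero_of_sq_lt {ρ : ℝ} (hf : ∀ x : ℝ × ℝ, ρ ^ 2 < x.1 ^ 2 + x.2 ^ 2 → f x = 0)
    (θ : ℝ) {r : ℝ} (hr : ρ ^ 2 < r ^ 2) : lineProj f θ r = 0 := by
  have hzero : ∀ t : ℝ, f (planeRotation θ (r, t)) = 0 := fun t => hf _ <| by
    have hnorm : (r * cos θ - t * sin θ) ^ 2 + (r * sin θ + t * cos θ) ^ 2 = r ^ 2 + t ^ 2 := by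
      linear_combination (r ^ 2 + t ^ 2) * sin_sq_add_cos_sq θ
    rw [planeRotation_apply, hnorm]
    nlinarith [sq_nonneg t]
  simp [lineProj_eq_integral_planeRotation, hzero]

lemma lineProj_comp_sub (f : ℝ × ℝ → ℝ) (s : ℝ × ℝ) (θ r : ℝ) :
    lineProj (fun x => f (x.1 - s.1, x.2 - s.2)) θ r
      = lineProj f θ (r - (s.1 * cos θ + s.2 * sin θ)) := by
  simp only [lineProj_eq_integral_planeRotation]
  rw [← integral_sub_right_eq_self _ (s.1 * sin θ - s.2 * cos θ)]
  congr 1 with t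
  congr 1
  ext <;> simp only [planeRotation_apply]
  · linear_combination s.1 * sin_sq_add_cos_sq θ
  · linear_combination s.2 * sin_sq_add_cos_sq θ

end LineProjection

lemma cdfOf_comp_sub (μ : ℝ → ℝ) (c t : ℝ) :
    cdfOf (fun r => μ (r - c)) t = cdfOf μ (t - c) := by
  have hpre : (fun r => r - c) ⁻¹' Iic (t - c) = Iic t := by
    rw [preimage_sub_const_Iic, sub_add_cancel]
  rw [cdfOf, cdfOf, ← hpre, (measurePreserving_sub_right volume c).setIntegral_preimage_emb
    (measurableEmbedding_subRight c)]

section Quantile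

variable {μ : ℝ → ℝ}

lemma quantileOf_comp_sub (c : ℝ) {z : ℝ} (hne : {t | z ≤ cdfOf μ t}.Nonempty)
    (hbdd : BddBelow {t | z ≤ cdfOf μ t}) :
    quantileOf (fun r => μ (r - c)) z = quantileOf μ z + c := by
  have hset : {t | z ≤ cdfOf (fun r => μ (r - c)) t}
      = OrderIso.addRight c '' {t | z ≤ cdfOf μ t} := by
    ext t
    simp only [mem_ofPred_eq, mem_image, cdfOf_comp_sub, OrderIso.addRight_apply]
    exact ⟨fun h => ⟨t - c, h, sub_add_cancel t c⟩, by rintro ⟨a, ha, rfl⟩; simpa using ha⟩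
  rw [quantileOf, quantileOf, hset, ← OrderIso.map_csInf' _ hne hbdd, OrderIso.addRight_apply]

variable {a b : ℝ} (hsupp : ∀ r ∉ Icc a b, μ r = 0)
include hsupp

lemma cdfOf_eq_zero_of_lt {t : ℝ} (ht : t < a) : cdfOf μ t = 0 :=
  setIntegral_eq_zero_of_forall_eq_zero fun r hr =>
    hsupp r fun hr' => (ht.trans_le hr'.1).not_ge (mem_Iic.mp hr)

lemma cdfOf_eq_integral_of_le {t : ℝ} (ht : b ≤ t) : cdfOf μ t = ∫ r, μ r :=
  setIntegral_eq_integral_of_forall_compl_eq_zero fun r hr =>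
    hsupp r fun hr' => hr (mem_Iic.mpr (hr'.2.trans ht))

lemma wassersteinPow_comp_sub (hμ : ∫ r, μ r = 1) (p c : ℝ) :
    wassersteinPow p μ (fun r => μ (r - c)) = |c| ^ p := by
  have hquantile : ∀ z ∈ Ioo (0 : ℝ) 1, quantileOf (fun r => μ (r - c)) z = quantileOf μ z + c :=
    fun z hz => quantileOf_comp_sub c
      ⟨b, by simp only [mem_ofPred_eq, cdfOf_eq_integral_of_le hsupp le_rfl, hμ, hz.2.le]⟩
      ⟨a, fun t ht => not_lt.mp fun hta => by
        simp only [mem_ofPred_eq, cdfOf_eq_zero_of_lt hsupp hta] at ht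
        exact hz.1.not_ge ht⟩
  rw [wassersteinPow, setIntegral_congr_fun measurableSet_Ioo (g := fun _ => |c| ^ p)
    fun z hz => by rw [hquantile z hz, sub_add_cancel_left, abs_neg]]
  simp

end Quantile

section AngularMoment

variable {p : ℝ}

lemma setIntegral_Ioi_rpow_mul_exp_neg_sq (hp : -1 < p) :
    ∫ x in Ioi (0 : ℝ), x ^ p * exp (-x ^ 2) = Gamma ((p + 1) / 2) / 2 := by
  have h := integral_rpow_mul_exp_neg_rpow (p := 2) (by norm_num) hp
  simp only [rpow_two] at h
  rw [h]
  ring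

lemma integral_abs_rpow_mul_exp_neg_sq (hp : -1 < p) :
    ∫ x, |x| ^ p * exp (-x ^ 2) = Gamma ((p + 1) / 2) := by
  rw [show (fun x : ℝ => |x| ^ p * exp (-x ^ 2)) = fun x => |x| ^ p * exp (-|x| ^ 2) by
    simp only [sq_abs], integral_comp_abs (f := fun x => x ^ p * exp (-x ^ 2)),
    setIntegral_Ioi_rpow_mul_exp_neg_sq hp]
  ring

lemma integral_abs_fst_rpow_mul_exp_neg_sq_add_sq (hp : -1 < p) :
    ∫ x : ℝ × ℝ, |x.1| ^ p * exp (-(x.1 ^ 2 + x.2 ^ 2)) = Gamma ((p + 1) / 2) * √π := by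
  simp_rw [neg_add, exp_add, ← mul_assoc]
  rw [Measure.volume_eq_prod, integral_prod_mul (f := fun a => |a| ^ p * exp (-a ^ 2))
    (g := fun b => exp (-b ^ 2)), integral_abs_rpow_mul_exp_neg_sq hp]
  simpa using congrArg (Gamma ((p + 1) / 2) * ·) (integral_gaussian 1)

lemma integral_abs_fst_rpow_mul_exp_neg_sq_add_sq_eq_polar (hp : -1 < p) :
    ∫ x : ℝ × ℝ, |x.1| ^ p * exp (-(x.1 ^ 2 + x.2 ^ 2))
      = Gamma (p / 2 + 1) / 2 * ∫ θ in Ioo (-π) π, |cos θ| ^ p := by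
  have hpolar : ∀ q ∈ Ioi (0 : ℝ) ×ˢ Ioo (-π) π,
      q.1 • (|(polarCoord.symm q).1| ^ p
        * exp (-((polarCoord.symm q).1 ^ 2 + (polarCoord.symm q).2 ^ 2)))
      = (q.1 ^ (p + 1) * exp (-q.1 ^ 2)) * |cos q.2| ^ p := by
    rintro ⟨r, θ⟩ ⟨hr, -⟩
    have hr : 0 < r := hr
    have hsq : (r * cos θ) ^ 2 + (r * sin θ) ^ 2 = r ^ 2 := by
      linear_combination r ^ 2 * sin_sq_add_cos_sq θ
    rw [polarCoord_symm_apply, hsq, abs_mul, abs_of_pos hr, mul_rpow hr.le (abs_nonneg _),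
      rpow_add_one hr.ne', smul_eq_mul]
    ring
  rw [← integral_comp_polarCoord_symm, polarCoord_target,
    setIntegral_congr_fun (measurableSet_Ioi.prod measurableSet_Ioo) hpolar,
    Measure.volume_eq_prod, setIntegral_prod_mul (f := fun r => r ^ (p + 1) * exp (-r ^ 2))
      (g := fun θ => |cos θ| ^ p), setIntegral_Ioi_rpow_mul_exp_neg_sq (by linarith)]
  ring_nf

lemma integral_abs_cos_rpow (hp : -1 < p) :
    ∫ θ in Ioo (-π) π, |cos θ| ^ p = 2 * √π * Gamma ((p + 1) / 2) / Gamma (p / 2 + 1) := by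
  have hΓ : 0 < Gamma (p / 2 + 1) := Gamma_pos_of_pos (by linarith)
  have h := (integral_abs_fst_rpow_mul_exp_neg_sq_add_sq hp).symm.trans
    (integral_abs_fst_rpow_mul_exp_neg_sq_add_sq_eq_polar hp)
  rw [eq_div_iff hΓ.ne']
  linear_combination -2 * h

lemma integral_abs_cos_sub_rpow (hp : -1 < p) (φ : ℝ) :
    ∫ θ in Ioo 0 (2 * π), |cos (θ - φ)| ^ p
      = 2 * √π * Gamma ((p + 1) / 2) / Gamma (p / 2 + 1) := by
  have hperiodic : Function.Periodic (fun θ => |cos θ| ^ p) (2 * π) := fun θ => by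
    simp only [cos_add_two_pi]
  rw [← integral_abs_cos_rpow hp, ← integral_Ioc_eq_integral_Ioo,
    ← integral_Ioc_eq_integral_Ioo, ← intervalIntegral.integral_of_le (by positivity),
    ← intervalIntegral.integral_of_le (by linarith [pi_pos]),
    intervalIntegral.integral_comp_sub_right (fun θ => |cos θ| ^ p), zero_sub,
    show 2 * π - φ = -φ + 2 * π by ring, hperiodic.intervalIntegral_add_eq (-φ) (-π)]
  ring_nf

lemma integral_abs_mul_cos_add_mul_sin_rpow (hp : -1 < p) (s : ℝ × ℝ) :
    ∫ θ in Ioo 0 (2 * π), |s.1 * cos θ + s.2 * sin θ| ^ p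
      = √(s.1 ^ 2 + s.2 ^ 2) ^ p * (2 * √π * Gamma ((p + 1) / 2) / Gamma (p / 2 + 1)) := by
  set w : ℂ := ⟨s.1, s.2⟩
  have hw : ‖w‖ = √(s.1 ^ 2 + s.2 ^ 2) := Complex.norm_eq_sqrt_sq_add_sq w
  have hre : ‖w‖ * cos w.arg = s.1 := Complex.norm_mul_cos_arg w
  have him : ‖w‖ * sin w.arg = s.2 := Complex.norm_mul_sin_arg w
  have hcos : ∀ θ, s.1 * cos θ + s.2 * sin θ = ‖w‖ * cos (θ - w.arg) := fun θ => by
    rw [cos_sub]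
    linear_combination (-cos θ) * hre - sin θ * him
  simp_rw [hcos, abs_mul, abs_norm, mul_rpow (norm_nonneg w) (abs_nonneg _)]
  rw [integral_const_mul, integral_abs_cos_sub_rpow hp, hw]

end AngularMoment

lemma slicedWassersteinPow_comp_sub {f : ℝ × ℝ → ℝ} {ρ : ℝ} (hf : ∫ x, f x = 1)
    (hsupp : ∀ x : ℝ × ℝ, ρ ^ 2 < x.1 ^ 2 + x.2 ^ 2 → f x = 0) {p : ℝ} (hp : -1 < p)
    (s : ℝ × ℝ) :
    slicedWassersteinPow p f (fun x => f (x.1 - s.1, x.2 - s.2))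
      = Gamma ((p + 1) / 2) / (√π * Gamma (p / 2 + 1)) * √(s.1 ^ 2 + s.2 ^ 2) ^ p := by
  have hfi : Integrable f := Integrable.of_integral_ne_zero (by simp [hf])
  have hcost : ∀ θ, wassersteinPow p (lineProj f θ)
      (lineProj (fun x => f (x.1 - s.1, x.2 - s.2)) θ) = |s.1 * cos θ + s.2 * sin θ| ^ p :=
    fun θ => by
      simp only [funext (lineProj_comp_sub f s θ)]
      refine wassersteinPow_comp_sub (a := -|ρ|) (b := |ρ|) (fun r hr => ?_)
        ((integral_lineProj hfi θ).trans hf) p _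
      exact lineProj_eq_zero_of_sq_lt hsupp θ
        (sq_lt_sq.mpr (not_le.mp fun hle => hr (abs_le.mp hle)))
  rw [slicedWassersteinPow, setIntegral_congr_fun measurableSet_Ioo fun θ _ => hcost θ,
    integral_abs_mul_cos_add_mul_sin_rpow hp]
  have hπ : √π ^ 2 = π := sq_sqrt pi_pos.le
  have hsqrtπ : 0 < √π := sqrt_pos.mpr pi_pos
  field_simp
  rw [hπ]
  ring

theorem sliced_wasserstein_translation_general
    (f : ℝ × ℝ → ℝ)
    (hfint : ∫ x : ℝ × ℝ, f x = 1)
    (hfsupp : ∀ x : ℝ × ℝ, 1 < x.1 ^ 2 + x.2 ^ 2 → f x = 0)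
    (s : ℝ × ℝ) (g : ℝ × ℝ → ℝ)
    (hg : ∀ x : ℝ × ℝ, g x = f (x.1 - s.1, x.2 - s.2))
    (p : ℝ) (hp : 1 ≤ p) :
    slicedWasserstein p f g
      = (Real.Gamma ((p + 1) / 2) / (Real.sqrt π * Real.Gamma (p / 2 + 1))) ^ (1 / p)
        * Real.sqrt (s.1 ^ 2 + s.2 ^ 2) ∧
    slicedWassersteinPow p f g
      = (Real.Gamma ((p + 1) / 2) / (Real.sqrt π * Real.Gamma (p / 2 + 1)))
        * Real.sqrt (s.1 ^ 2 + s.2 ^ 2) ^ p := by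
  obtain rfl : g = fun x => f (x.1 - s.1, x.2 - s.2) := funext hg
  have hpow := slicedWassersteinPow_comp_sub (ρ := 1) hfint (by simpa only [one_pow] using hfsupp)
    (by linarith : -1 < p) s
  refine ⟨?_, hpow⟩
  rw [slicedWasserstein, hpow, mul_rpow (by positivity) (by positivity),
    ← rpow_mul (sqrt_nonneg _), mul_one_div_cancel (by linarith), rpow_one]

/-- Translation equivariance of the sliced `p`-Wasserstein distance:
if `g = T_s f` is the translate of a probability density `f` supported on the unit disk, then
`d_{SWp}(f, g) = (Γ((p+1)/2)/(√π Γ(p/2+1)))^{1/p} ‖s‖`, equivalently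
`d_{SWp}^p(f, g) = (Γ((p+1)/2)/(√π Γ(p/2+1))) ‖s‖^p`. -/
theorem sliced_wasserstein_translation
    (f : ℝ × ℝ → ℝ)
    (hfnonneg : ∀ x, 0 ≤ f x)
    (hfint : ∫ x : ℝ × ℝ, f x = 1)
    (hfsupp : ∀ x : ℝ × ℝ, 1 < x.1 ^ 2 + x.2 ^ 2 → f x = 0)
    (s : ℝ × ℝ) (g : ℝ × ℝ → ℝ)
    (hg : ∀ x : ℝ × ℝ, g x = f (x.1 - s.1, x.2 - s.2))
    (p : ℝ) (hp : 1 ≤ p) :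
    slicedWasserstein p f g
      = (Real.Gamma ((p + 1) / 2) / (Real.sqrt π * Real.Gamma (p / 2 + 1))) ^ (1 / p)
        * Real.sqrt (s.1 ^ 2 + s.2 ^ 2) ∧
    slicedWassersteinPow p f g
      = (Real.Gamma ((p + 1) / 2) / (Real.sqrt π * Real.Gamma (p / 2 + 1)))
        * Real.sqrt (s.1 ^ 2 + s.2 ^ 2) ^ p :=
  sliced_wasserstein_translation_general f hfint hfsupp s g hg p hp
end

section
/- For all θ ∈ [0, π] and α ∈ [0, π/2], define g(α; θ) = arccos(cos²α + sin²α · cos θ). Then g(α; θ) = 2 arcsin(sin α · sin(θ/2)), and g(α; θ) ≤ min{2 sin(θ/2) · α, θ} ≤ min{α, 1} · θ. -/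
open Real Set

lemma sin_concave_aux {s α : ℝ} (hs0 : 0 ≤ s) (hs1 : s ≤ 1) (hα0 : 0 ≤ α)
    (hαπ : α ≤ π) : s * Real.sin α ≤ Real.sin (s * α) := by
  have := strictConcaveOn_sin_Icc.concaveOn.2 (x := 0) (y := α)
    ⟨le_rfl, pi_pos.le⟩ ⟨hα0, hαπ⟩ (sub_nonneg.2 hs1) hs0 (by ring)
  simpa using this

/-- For `θ ∈ [0, π]` and `α ∈ [0, π/2]`, the angular misalignment
`g(α; θ) = arccos(cos²α + sin²α cos θ)` satisfies
`g(α; θ) = 2 arcsin(sin α · sin(θ/2))` and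
`g(α; θ) ≤ min {2 sin(θ/2) α, θ} ≤ min {α, 1} · θ`. -/
theorem misalignment_formula_and_bound (θ α : ℝ)
    (hθ : θ ∈ Set.Icc (0:ℝ) π) (hα : α ∈ Set.Icc (0:ℝ) (π / 2)) :
    Real.arccos (Real.cos α ^ 2 + Real.sin α ^ 2 * Real.cos θ)
      = 2 * Real.arcsin (Real.sin α * Real.sin (θ / 2)) ∧
    Real.arccos (Real.cos α ^ 2 + Real.sin α ^ 2 * Real.cos θ)
      ≤ min (2 * Real.sin (θ / 2) * α) θ ∧
    min (2 * Real.sin (θ / 2) * α) θ ≤ min α 1 * θ := by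
  obtain ⟨hθ0, hθπ⟩ := hθ
  obtain ⟨hα0, hαπ⟩ := hα
  set s := Real.sin (θ / 2) with hs
  have hθ2_0 : 0 ≤ θ / 2 := by linarith
  have hθ2_π : θ / 2 ≤ π / 2 := by linarith
  have hs0 : 0 ≤ s := Real.sin_nonneg_of_nonneg_of_le_pi hθ2_0 (by linarith [pi_pos])
  have hs1 : s ≤ 1 := Real.sin_le_one _
  have hsinα0 : 0 ≤ Real.sin α := Real.sin_nonneg_of_nonneg_of_le_pi hα0 (by linarith [pi_pos])
  have hsinα1 : Real.sin α ≤ 1 := Real.sin_le_one _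
  set x := Real.sin α * s with hx
  have hx0 : 0 ≤ x := mul_nonneg hsinα0 hs0
  have hx1 : x ≤ 1 := by
    calc x ≤ 1 * 1 := mul_le_mul hsinα1 hs1 hs0 zero_le_one
    _ = 1 := one_mul 1
  -- the argument of arccos equals cos (2 arcsin x)
  have harg : Real.cos α ^ 2 + Real.sin α ^ 2 * Real.cos θ = Real.cos (2 * Real.arcsin x) := by
    have hθcos : Real.cos θ = 1 - 2 * s ^ 2 := by
      have h2 : Real.cos θ = 2 * Real.cos (θ / 2) ^ 2 - 1 := by
        rw [← Real.cos_two_mul]; ring_nf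
      rw [h2]
      have := Real.sin_sq_add_cos_sq (θ / 2)
      nlinarith [this]
    rw [Real.cos_two_mul, Real.cos_arcsin]
    have hxsq : Real.sqrt (1 - x ^ 2) ^ 2 = 1 - x ^ 2 :=
      Real.sq_sqrt (by nlinarith)
    rw [hxsq, hθcos]
    have hpy := Real.sin_sq_add_cos_sq α
    nlinarith [hpy]
  -- range of 2 arcsin x
  have harcsin0 : 0 ≤ Real.arcsin x := Real.arcsin_nonneg.2 hx0
  have harcsinπ : Real.arcsin x ≤ π / 2 := Real.arcsin_le_pi_div_two x
  have heq : Real.arccos (Real.cos α ^ 2 + Real.sin α ^ 2 * Real.cos θ)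
      = 2 * Real.arcsin x := by
    rw [harg, Real.arccos_cos (by linarith) (by linarith)]
  refine ⟨heq, ?_, ?_⟩
  · rw [heq]
    have h1 : Real.arcsin x ≤ s * α := by
      have hsin : x ≤ Real.sin (s * α) := by
        calc x = s * Real.sin α := by rw [hx]; ring
        _ ≤ Real.sin (s * α) := sin_concave_aux hs0 hs1 hα0 (by linarith [pi_pos])
      have hsα0 : 0 ≤ s * α := mul_nonneg hs0 hα0
      have hsαπ : s * α ≤ π / 2 := by
        calc s * α ≤ 1 * (π / 2) := mul_le_mul hs1 hαπ hα0 zero_le_one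
        _ = π / 2 := one_mul _
      calc Real.arcsin x ≤ Real.arcsin (Real.sin (s * α)) := Real.monotone_arcsin hsin
      _ = s * α := Real.arcsin_sin (by linarith [pi_pos]) (by linarith)
    have h2 : Real.arcsin x ≤ θ / 2 := by
      have hxle : x ≤ s := by
        calc x = Real.sin α * s := hx
        _ ≤ 1 * s := by apply mul_le_mul_of_nonneg_right hsinα1 hs0
        _ = s := one_mul s
      calc Real.arcsin x ≤ Real.arcsin s := Real.monotone_arcsin hxle
      _ = θ / 2 := Real.arcsin_sin (by linarith [pi_pos]) (by linarith)
    refine le_min (by linarith) (by linarith)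
  · rcases le_or_gt α 1 with h | h
    · have : 2 * s * α ≤ α * θ := by
        have h2s : 2 * s ≤ θ := by
          have := Real.sin_le hθ2_0
          linarith
        calc 2 * s * α ≤ θ * α := mul_le_mul_of_nonneg_right h2s hα0
        _ = α * θ := mul_comm θ α
      calc min (2 * s * α) θ ≤ 2 * s * α := min_le_left _ _
      _ ≤ α * θ := this
      _ = min α 1 * θ := by rw [min_eq_left h]
    · calc min (2 * s * α) θ ≤ θ := min_le_right _ _
      _ = min α 1 * θ := by rw [min_eq_right h.le, one_mul]
end

section
/- For every p ≥ 1 and every θ ∈ [0, π], the average of the p-th power of the angular misalignment g(α; θ) = 2 arcsin(sin α · sin(θ/2)) over α ∈ [0, π/2] satisfies (2/π) ∫₀^{π/2} g(α; θ)^p dα ≤ (1 − 2p/((p+1)π)) · θ^p. -/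
/-!
Since `sin` is concave on `[0, π]` and vanishes at `0`, `t sin x ≤ sin (t x)` for `t ∈ [0, 1]`,
i.e. `arcsin (t c) ≤ t arcsin c`; with `t = sin α` and `c = sin (θ/2)` this gives the pointwise
bound `g(α; θ) ≤ θ sin α`. It remains to bound `∫₀^{π/2} sin^p`, which follows from
`(1 - sin^p α)(1 - cos α) ≥ 0` and `∫₀^{π/2} sin^p α cos α dα = 1/(p+1)`.
-/

open Real Set

namespace Real

theorem mul_sin_le_sin_mul {t x : ℝ} (ht : t ∈ Icc (0 : ℝ) 1) (hx : x ∈ Icc 0 π) :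
    t * sin x ≤ sin (t * x) := by
  have hconc := strictConcaveOn_sin_Icc.concaveOn.2 hx ⟨le_rfl, pi_pos.le⟩ ht.1
    (sub_nonneg.2 ht.2) (add_sub_cancel t 1)
  simpa only [smul_eq_mul, mul_zero, sin_zero, add_zero] using hconc

theorem arcsin_mul_le_mul_arcsin {t c : ℝ} (ht : t ∈ Icc (0 : ℝ) 1)
    (hc : c ∈ Icc (0 : ℝ) 1) :
    arcsin (t * c) ≤ t * arcsin c := by
  have harcsin_nonneg : 0 ≤ arcsin c := arcsin_nonneg.2 hc.1
  have hmem : t * arcsin c ∈ Icc (-(π / 2)) (π / 2) :=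
    ⟨by linarith [pi_pos, mul_nonneg ht.1 harcsin_nonneg],
      (mul_le_of_le_one_left harcsin_nonneg ht.2).trans (arcsin_le_pi_div_two c)⟩
  have htc : t * c ∈ Icc (-1 : ℝ) 1 :=
    ⟨by linarith [mul_nonneg ht.1 hc.1], mul_le_one₀ ht.2 hc.1 hc.2⟩
  rw [arcsin_le_iff_le_sin htc hmem]
  calc t * c = t * sin (arcsin c) := by rw [sin_arcsin (by linarith [hc.1]) hc.2]
    _ ≤ sin (t * arcsin c) :=
      mul_sin_le_sin_mul ht
        ⟨harcsin_nonneg, (arcsin_le_pi_div_two c).trans (by linarith [pi_pos])⟩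

theorem two_mul_arcsin_mul_sin_half_le {t θ : ℝ} (ht : t ∈ Icc (0 : ℝ) 1)
    (hθ : θ ∈ Icc 0 π) :
    2 * arcsin (t * sin (θ / 2)) ≤ θ * t := by
  have hsin : sin (θ / 2) ∈ Icc (0 : ℝ) 1 :=
    ⟨sin_nonneg_of_nonneg_of_le_pi (by linarith [hθ.1]) (by linarith [hθ.2, pi_pos]),
      sin_le_one _⟩
  have h := arcsin_mul_le_mul_arcsin ht hsin
  rw [arcsin_sin (by linarith [hθ.1, pi_pos]) (by linarith [hθ.2])] at h
  linarith

theorem integral_sin_rpow_mul_cos {p : ℝ} (hp : 0 ≤ p) :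
    ∫ α in (0 : ℝ)..(π / 2), sin α ^ p * cos α = 1 / (p + 1) := by
  have hsubst := intervalIntegral.integral_comp_mul_deriv (a := 0) (b := π / 2)
    (fun x _ => hasDerivAt_sin x) continuous_cos.continuousOn (continuous_rpow_const hp)
  simp only [Function.comp_def, sin_zero, sin_pi_div_two] at hsubst
  rw [hsubst, integral_rpow (Or.inl (by linarith)), one_rpow,
    zero_rpow (by linarith : p + 1 ≠ 0), sub_zero]

theorem integral_sin_rpow_le {p : ℝ} (hp : 0 ≤ p) :
    ∫ α in (0 : ℝ)..(π / 2), sin α ^ p ≤ π / 2 - p / (p + 1) := by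
  have hsin_rpow : Continuous fun α : ℝ => sin α ^ p :=
    continuous_sin.rpow_const fun _ => Or.inr hp
  have hmajorant : Continuous fun α : ℝ => 1 - cos α + sin α ^ p * cos α := by fun_prop
  have hmono : ∫ α in (0 : ℝ)..(π / 2), sin α ^ p
      ≤ ∫ α in (0 : ℝ)..(π / 2), (1 - cos α + sin α ^ p * cos α) := by
    refine intervalIntegral.integral_mono_on pi_div_two_pos.le (hsin_rpow.intervalIntegrable _ _)
      (hmajorant.intervalIntegrable _ _) fun x hx => ?_
    have hsin_nonneg : 0 ≤ sin x :=
      sin_nonneg_of_nonneg_of_le_pi hx.1 (by linarith [hx.2, pi_pos])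
    have hrpow_le_one : sin x ^ p ≤ 1 := rpow_le_one hsin_nonneg (sin_le_one x) hp
    nlinarith [cos_le_one x]
  have hmajorant_integral : ∫ α in (0 : ℝ)..(π / 2), (1 - cos α + sin α ^ p * cos α)
      = π / 2 - p / (p + 1) := by
    have hone_sub_cos : Continuous fun α : ℝ => 1 - cos α := by fun_prop
    have hsin_rpow_mul_cos : Continuous fun α : ℝ => sin α ^ p * cos α := by fun_prop
    rw [intervalIntegral.integral_add (hone_sub_cos.intervalIntegrable _ _)
        (hsin_rpow_mul_cos.intervalIntegrable _ _),
      intervalIntegral.integral_sub intervalIntegrable_const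
        (continuous_cos.intervalIntegrable _ _),
      integral_one, integral_cos, integral_sin_rpow_mul_cos hp, sin_pi_div_two, sin_zero]
    field_simp
    ring
  exact hmono.trans hmajorant_integral.le

theorem rpow_two_mul_arcsin_sin_mul_sin_half_le {p α θ : ℝ} (hp : 0 ≤ p)
    (hα : α ∈ Icc 0 π) (hθ : θ ∈ Icc 0 π) :
    (2 * arcsin (sin α * sin (θ / 2))) ^ p ≤ θ ^ p * sin α ^ p := by
  have hsin : sin α ∈ Icc (0 : ℝ) 1 :=
    ⟨sin_nonneg_of_nonneg_of_le_pi hα.1 hα.2, sin_le_one α⟩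
  have hsin_half : 0 ≤ sin (θ / 2) :=
    sin_nonneg_of_nonneg_of_le_pi (by linarith [hθ.1]) (by linarith [hθ.2, pi_pos])
  have harcsin_nonneg := arcsin_nonneg.2 (mul_nonneg hsin.1 hsin_half)
  rw [← mul_rpow hθ.1 hsin.1]
  exact rpow_le_rpow (by linarith) (two_mul_arcsin_mul_sin_half_le hsin hθ) hp

end Real

/-- For every `p ≥ 1` and `θ ∈ [0, π]`, the average of the `p`-th power of the angular
misalignment `g(α; θ) = 2 arcsin(sin α · sin(θ/2))` over `α ∈ [0, π/2]` satisfies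
`(2/π) ∫₀^{π/2} g(α; θ)^p dα ≤ (1 − 2p/((p+1)π)) θ^p`. -/
theorem misalignment_average_power_bound (p θ : ℝ) (hp : 1 ≤ p)
    (hθ : θ ∈ Set.Icc (0:ℝ) π) :
    (2 / π) * ∫ α in (0:ℝ)..(π / 2),
        (2 * Real.arcsin (Real.sin α * Real.sin (θ / 2))) ^ p
      ≤ (1 - 2 * p / ((p + 1) * π)) * θ ^ p := by
  have hp0 : 0 ≤ p := by linarith
  have hrpow : ∀ f : ℝ → ℝ, Continuous f → Continuous fun α => f α ^ p :=
    fun f hf => hf.rpow_const fun _ => Or.inr hp0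
  have hintegral : ∫ α in (0 : ℝ)..(π / 2), (2 * arcsin (sin α * sin (θ / 2))) ^ p
      ≤ θ ^ p * (π / 2 - p / (p + 1)) :=
    calc ∫ α in (0 : ℝ)..(π / 2), (2 * arcsin (sin α * sin (θ / 2))) ^ p
        ≤ ∫ α in (0 : ℝ)..(π / 2), θ ^ p * sin α ^ p :=
          intervalIntegral.integral_mono_on pi_div_two_pos.le
            ((hrpow _ (by fun_prop)).intervalIntegrable _ _)
            ((continuous_const.mul (hrpow _ continuous_sin)).intervalIntegrable _ _)
            fun α hα => rpow_two_mul_arcsin_sin_mul_sin_half_le hp0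
              ⟨hα.1, hα.2.trans (by linarith [pi_pos])⟩ hθ
      _ = θ ^ p * ∫ α in (0 : ℝ)..(π / 2), sin α ^ p :=
          intervalIntegral.integral_const_mul _ _
      _ ≤ θ ^ p * (π / 2 - p / (p + 1)) :=
          mul_le_mul_of_nonneg_left (integral_sin_rpow_le hp0) (rpow_nonneg hθ.1 p)
  calc (2 / π) * ∫ α in (0 : ℝ)..(π / 2), (2 * arcsin (sin α * sin (θ / 2))) ^ p
      ≤ (2 / π) * (θ ^ p * (π / 2 - p / (p + 1))) :=
        mul_le_mul_of_nonneg_left hintegral (by positivity)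
    _ = (1 - 2 * p / ((p + 1) * π)) * θ ^ p := by field_simp
end

section
/- Let f, g be probability densities on ℝ² supported on the closed unit disk, and define H(θ) = d_{W2}²(P_θ f, P_θ g). For n ≥ 1 let θ_k = 2πk/n, k = 0, …, n−1, be the uniform angular grid. Then the quadrature error satisfies |(1/2π) ∫₀^{2π} H(θ) dθ − (1/n) Σ_{k=0}^{n−1} H(θ_k)| ≤ 8π/n. -/
open MeasureTheory Real Set

/-!
`P_θ f` is the marginal of `f` along `e_θ = (cos θ, sin θ)`, so its CDF at `t` is the `f`-mass of
the half-plane `⟪x, e_θ⟫ ≤ t`. On the unit disk `|⟪x, e_θ' - e_θ⟫| ≤ |e_θ' - e_θ| ≤ |θ - θ'|`, so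
for `f ≥ 0` supported there the CDF at angle `θ` is dominated by the CDF at `θ'` shifted by
`|θ - θ'|`; hence the quantiles, which lie in `[-1, 1]`, are `1`-Lipschitz in `θ`. Writing
`H(θ) = ∫₀¹ u_θ²` with `u_θ = Q_f - Q_g`, the bounds `|u_θ| ≤ 2` and `|u_θ - u_θ'| ≤ 2|θ - θ'|`
make `H` `8`-Lipschitz. A left Riemann sum of an `L`-Lipschitz function with mesh `h` misses the
integral by at most `L h / 2` per unit length, which for `L = 8`, `h = 2π/n` is `8π/n`.
-/

section GeneralizedInverse

variable {F G : ℝ → ℝ} {z : ℝ}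

lemma bddBelow_setOf_le_of_lt {a : ℝ} (hlow : ∀ t < a, F t < z) : BddBelow {t | z ≤ F t} :=
  ⟨a, fun _ ht => not_lt.mp fun h => (hlow _ h).not_ge ht⟩

lemma csInf_setOf_le_mem_Icc {a b : ℝ} (hlow : ∀ t < a, F t < z) (hhigh : z ≤ F b) :
    sInf {t | z ≤ F t} ∈ Icc a b :=
  ⟨le_csInf ⟨b, hhigh⟩ fun _ ht => not_lt.mp fun h => (hlow _ h).not_ge ht,
    csInf_le (bddBelow_setOf_le_of_lt hlow) hhigh⟩

lemma csInf_setOf_le_le_add {c : ℝ} (hFG : ∀ t, F t ≤ G (t + c)) (hne : ∃ t, z ≤ F t)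
    (hbdd : BddBelow {t | z ≤ G t}) : sInf {t | z ≤ G t} ≤ sInf {t | z ≤ F t} + c := by
  rw [← sub_le_iff_le_add]
  refine le_csInf hne fun t ht => sub_le_iff_le_add.mpr ?_
  exact csInf_le hbdd (ht.trans (hFG t))

end GeneralizedInverse

namespace LipschitzWith

variable {H : ℝ → ℝ} {L : NNReal}

lemma abs_intervalIntegral_sub_mul_le (hH : LipschitzWith L H) {a b : ℝ} (hab : a ≤ b) :
    |(∫ t in a..b, H t) - (b - a) * H a| ≤ L * (b - a) ^ 2 / 2 := by
  have hsub : (∫ t in a..b, H t) - (b - a) * H a = ∫ t in a..b, (H t - H a) := by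
    rw [intervalIntegral.integral_sub (hH.continuous.intervalIntegrable a b)
      intervalIntegrable_const, intervalIntegral.integral_const, smul_eq_mul]
  have hpoint : ∀ t ∈ Ioc a b, ‖H t - H a‖ ≤ L * (t - a) := fun t ht => by
    simpa [dist_eq, abs_of_nonneg (sub_nonneg.mpr ht.1.le)] using hH.dist_le_mul t a
  calc |(∫ t in a..b, H t) - (b - a) * H a| = ‖∫ t in a..b, (H t - H a)‖ := by
        rw [hsub, Real.norm_eq_abs]
    _ ≤ ∫ t in a..b, L * (t - a) :=
        intervalIntegral.norm_integral_le_of_norm_le hab (ae_of_all _ hpoint)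
          (Continuous.intervalIntegrable (by fun_prop) a b)
    _ = L * (b - a) ^ 2 / 2 := by
        simp only [intervalIntegral.integral_const_mul, intervalIntegral.integral_sub
          intervalIntegral.intervalIntegrable_id intervalIntegrable_const, integral_id,
          intervalIntegral.integral_const, smul_eq_mul]
        ring

lemma abs_intervalIntegral_sub_leftRiemannSum_le (hH : LipschitzWith L H) {x : ℕ → ℝ}
    (hx : Monotone x) (n : ℕ) :
    |(∫ t in x 0..x n, H t) - ∑ k ∈ Finset.range n, (x (k + 1) - x k) * H (x k)|
      ≤ L / 2 * ∑ k ∈ Finset.range n, (x (k + 1) - x k) ^ 2 := by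
  rw [← intervalIntegral.sum_integral_adjacent_intervals
    fun k _ => hH.continuous.intervalIntegrable _ _, ← Finset.sum_sub_distrib, Finset.mul_sum]
  refine (Finset.abs_sum_le_sum_abs _ _).trans (Finset.sum_le_sum fun k _ => ?_)
  exact (hH.abs_intervalIntegral_sub_mul_le (hx k.le_succ)).trans_eq (by ring)

lemma abs_average_sub_uniformRiemannMean_le (hH : LipschitzWith L H) {a b : ℝ} (hab : a < b)
    {n : ℕ} (hn : n ≠ 0) :
    |1 / (b - a) * (∫ t in a..b, H t) - 1 / n * ∑ k ∈ Finset.range n, H (a + (b - a) * k / n)|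
      ≤ L * (b - a) / (2 * n) := by
  have hba : 0 < b - a := sub_pos.mpr hab
  have hn' : (0 : ℝ) < n := Nat.cast_pos.mpr (Nat.pos_of_ne_zero hn)
  set x : ℕ → ℝ := fun k => a + (b - a) * k / n
  have hx : Monotone x := fun i j hij => by
    simp only [x]
    gcongr
  have hstep : ∀ k, x (k + 1) - x k = (b - a) / n := fun k => by
    simp only [x]
    push_cast
    ring
  have h := hH.abs_intervalIntegral_sub_leftRiemannSum_le hx n
  simp only [hstep, Finset.sum_const, Finset.card_range, nsmul_eq_mul, ← Finset.mul_sum] at h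
  have hx0 : x 0 = a := by simp [x]
  have hxn : x n = b := by simp [x, hn'.ne']
  rw [hx0, hxn] at h
  have hnormalize : 1 / (b - a) * (∫ t in a..b, H t) - 1 / n * ∑ k ∈ Finset.range n, H (x k)
      = 1 / (b - a) * ((∫ t in a..b, H t) - (b - a) / n * ∑ k ∈ Finset.range n, H (x k)) := by
    field_simp
  rw [hnormalize, abs_mul, abs_of_pos (by positivity)]
  calc 1 / (b - a) * |(∫ t in a..b, H t) - (b - a) / n * ∑ k ∈ Finset.range n, H (x k)|
      ≤ 1 / (b - a) * (L / 2 * (n * ((b - a) / n) ^ 2)) := by gcongr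
    _ = L * (b - a) / (2 * n) := by
      field_simp

end LipschitzWith

lemma abs_sq_sub_sq_le {u v M : ℝ} (hu : |u| ≤ M) (hv : |v| ≤ M) :
    |u ^ 2 - v ^ 2| ≤ 2 * M * |u - v| := by
  rw [sq_sub_sq, abs_mul]
  exact mul_le_mul_of_nonneg_right (by linarith [abs_add_le u v]) (abs_nonneg _)

lemma sq_sub_cos_add_sq_sub_sin_le (θ θ' : ℝ) :
    (cos θ - cos θ') ^ 2 + (sin θ - sin θ') ^ 2 ≤ (θ - θ') ^ 2 := by
  nlinarith [one_sub_sq_div_two_le_cos (x := θ - θ'), cos_sub θ θ', sin_sq_add_cos_sq θ,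
    sin_sq_add_cos_sq θ']

noncomputable def rotationEquiv (θ : ℝ) : (ℝ × ℝ) ≃ᵐ (ℝ × ℝ) :=
  Complex.measurableEquivRealProd.symm.trans <|
    (rotation (Circle.exp θ)).toHomeomorph.toMeasurableEquiv.trans Complex.measurableEquivRealProd

lemma measurePreserving_rotationEquiv (θ : ℝ) : MeasurePreserving (rotationEquiv θ) :=
  Complex.volume_preserving_equiv_real_prod.comp <|
    (rotation (Circle.exp θ)).measurePreserving.comp
      (Complex.volume_preserving_equiv_real_prod.symm _)

lemma rotationEquiv_apply (θ : ℝ) (p : ℝ × ℝ) :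
    rotationEquiv θ p = (p.1 * cos θ - p.2 * sin θ, p.1 * sin θ + p.2 * cos θ) := by
  simp only [rotationEquiv, Complex.measurableEquivRealProd, MeasurableEquiv.trans_apply,
    Homeomorph.toMeasurableEquiv_symm_coe, ContinuousLinearEquiv.coe_symm_toHomeomorph,
    Homeomorph.toMeasurableEquiv_coe, LinearIsometryEquiv.coe_toHomeomorph, rotation_apply,
    Circle.coe_exp, ContinuousLinearEquiv.coe_toHomeomorph, Complex.equivRealProdCLM_apply,
    Complex.mul_re, Complex.mul_im, Complex.exp_ofReal_mul_I_re, Complex.exp_ofReal_mul_I_im,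
    Complex.equivRealProdCLM_symm_apply_re, Complex.equivRealProdCLM_symm_apply_im, Prod.mk.injEq]
  constructor <;> ring

def halfPlane (θ t : ℝ) : Set (ℝ × ℝ) := {x | x.1 * cos θ + x.2 * sin θ ≤ t}

lemma measurableSet_halfPlane (θ t : ℝ) : MeasurableSet (halfPlane θ t) :=
  measurableSet_le (by fun_prop) measurable_const

lemma rotationEquiv_preimage_halfPlane (θ t : ℝ) :
    rotationEquiv θ ⁻¹' halfPlane θ t = Iic t ×ˢ univ := by
  ext p
  have h : (p.1 * cos θ - p.2 * sin θ) * cos θ + (p.1 * sin θ + p.2 * cos θ) * sin θ = p.1 := by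
    linear_combination p.1 * cos_sq_add_sin_sq θ
  simp [halfPlane, rotationEquiv_apply, h]

lemma cdfOf_lineProj {f : ℝ × ℝ → ℝ} (hf : Integrable f) (θ t : ℝ) :
    cdfOf (lineProj f θ) t = ∫ x in halfPlane θ t, f x := by
  have hrot := measurePreserving_rotationEquiv θ
  have hemb := (rotationEquiv θ).measurableEmbedding
  have hcomp : Integrable (f ∘ rotationEquiv θ) := (hrot.integrable_comp_emb hemb).mpr hf
  rw [← hrot.setIntegral_preimage_emb hemb, rotationEquiv_preimage_halfPlane,
    Measure.volume_eq_prod, setIntegral_prod (fun p => f (rotationEquiv θ p)) hcomp.integrableOn]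
  simp [cdfOf, lineProj, rotationEquiv_apply]

lemma mem_halfPlane_add_abs_sub {x : ℝ × ℝ} (hx : x.1 ^ 2 + x.2 ^ 2 ≤ 1) {θ t : ℝ}
    (hxt : x ∈ halfPlane θ t) (θ' : ℝ) : x ∈ halfPlane θ' (t + |θ - θ'|) := by
  have hchord := sq_sub_cos_add_sq_sub_sin_le θ θ'
  have hxt' : x.1 * cos θ + x.2 * sin θ ≤ t := hxt
  show x.1 * cos θ' + x.2 * sin θ' ≤ t + |θ - θ'|
  nlinarith [sq_abs (θ - θ'), abs_nonneg (θ - θ'),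
    sq_nonneg (x.1 * (sin θ - sin θ') - x.2 * (cos θ - cos θ')),
    sq_nonneg (x.1 * (cos θ - cos θ') + x.2 * (sin θ - sin θ') + |θ - θ'|)]

def SupportedInUnitDisk (f : ℝ × ℝ → ℝ) : Prop := ∀ x : ℝ × ℝ, 1 < x.1 ^ 2 + x.2 ^ 2 → f x = 0

section HalfPlaneMass

variable {f : ℝ × ℝ → ℝ}

lemma setIntegral_halfPlane_of_lt_neg_one (hf : SupportedInUnitDisk f) (θ : ℝ) {t : ℝ}
    (ht : t < -1) : ∫ x in halfPlane θ t, f x = 0 := by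
  refine setIntegral_eq_zero_of_forall_eq_zero fun x hx => hf x ?_
  have hx' : x.1 * cos θ + x.2 * sin θ ≤ t := hx
  nlinarith [sin_sq_add_cos_sq θ, sq_nonneg (x.1 * sin θ - x.2 * cos θ),
    sq_nonneg (x.1 * cos θ + x.2 * sin θ + 1)]

lemma setIntegral_halfPlane_of_one_le (hf : SupportedInUnitDisk f) (θ : ℝ) {t : ℝ}
    (ht : 1 ≤ t) : ∫ x in halfPlane θ t, f x = ∫ x, f x := by
  refine setIntegral_eq_integral_of_forall_compl_eq_zero fun x hx => hf x ?_
  have hx' : t < x.1 * cos θ + x.2 * sin θ := not_le.mp hx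
  nlinarith [sin_sq_add_cos_sq θ, sq_nonneg (x.1 * sin θ - x.2 * cos θ),
    sq_nonneg (x.1 * cos θ + x.2 * sin θ - 1)]

lemma setIntegral_halfPlane_le_add_abs_sub (hpos : ∀ x, 0 ≤ f x) (hf : SupportedInUnitDisk f)
    (hfi : Integrable f) (θ θ' t : ℝ) :
    ∫ x in halfPlane θ t, f x ≤ ∫ x in halfPlane θ' (t + |θ - θ'|), f x := by
  set disk : Set (ℝ × ℝ) := {x | x.1 ^ 2 + x.2 ^ 2 ≤ 1}
  calc ∫ x in halfPlane θ t, f x = ∫ x in halfPlane θ t ∩ disk, f x :=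
        setIntegral_eq_of_subset_of_forall_sdiff_eq_zero (measurableSet_halfPlane θ t)
          inter_subset_left fun x hx => hf x (not_le.mp fun h => hx.2 ⟨hx.1, h⟩)
    _ ≤ ∫ x in halfPlane θ' (t + |θ - θ'|), f x :=
        setIntegral_mono_set hfi.integrableOn (ae_of_all _ hpos)
          (LE.le.eventuallyLE fun x hx => mem_halfPlane_add_abs_sub hx.2 hx.1 θ')

end HalfPlaneMass

section QuantileOfLineProj

variable {f : ℝ × ℝ → ℝ}

lemma cdfOf_lineProj_of_lt_neg_one (hint : ∫ x, f x = 1) (hf : SupportedInUnitDisk f)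
    (θ : ℝ) {t : ℝ} (ht : t < -1) : cdfOf (lineProj f θ) t = 0 := by
  rw [cdfOf_lineProj (.of_integral_ne_zero (by simp [hint])),
    setIntegral_halfPlane_of_lt_neg_one hf θ ht]

lemma cdfOf_lineProj_of_one_le (hint : ∫ x, f x = 1) (hf : SupportedInUnitDisk f)
    (θ : ℝ) {t : ℝ} (ht : 1 ≤ t) : cdfOf (lineProj f θ) t = 1 := by
  rw [cdfOf_lineProj (.of_integral_ne_zero (by simp [hint])),
    setIntegral_halfPlane_of_one_le hf θ ht, hint]

lemma le_cdfOf_lineProj_one (hint : ∫ x, f x = 1) (hf : SupportedInUnitDisk f)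
    (θ : ℝ) {z : ℝ} (hz : z ≤ 1) : z ≤ cdfOf (lineProj f θ) 1 := by
  rwa [cdfOf_lineProj_of_one_le hint hf θ le_rfl]

lemma bddBelow_setOf_le_cdfOf_lineProj (hint : ∫ x, f x = 1) (hf : SupportedInUnitDisk f)
    (θ : ℝ) {z : ℝ} (hz : 0 < z) : BddBelow {t | z ≤ cdfOf (lineProj f θ) t} :=
  bddBelow_setOf_le_of_lt (a := -1) fun _ ht => by
    rwa [cdfOf_lineProj_of_lt_neg_one hint hf θ ht]

lemma quantileOf_lineProj_mem_Icc (hint : ∫ x, f x = 1) (hf : SupportedInUnitDisk f)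
    (θ : ℝ) {z : ℝ} (hz : z ∈ Ioo 0 1) : quantileOf (lineProj f θ) z ∈ Icc (-1) 1 :=
  csInf_setOf_le_mem_Icc (fun _ ht => by rw [cdfOf_lineProj_of_lt_neg_one hint hf θ ht]; exact hz.1)
    (le_cdfOf_lineProj_one hint hf θ hz.2.le)

lemma monotoneOn_quantileOf_lineProj (hint : ∫ x, f x = 1) (hf : SupportedInUnitDisk f)
    (θ : ℝ) : MonotoneOn (quantileOf (lineProj f θ)) (Ioo 0 1) := fun _ hz₁ _ hz₂ hz =>
  csInf_le_csInf (bddBelow_setOf_le_cdfOf_lineProj hint hf θ hz₁.1)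
    ⟨1, le_cdfOf_lineProj_one hint hf θ hz₂.2.le⟩
    fun _ ht => hz.trans ht

lemma quantileOf_lineProj_le_add_abs_sub (hpos : ∀ x, 0 ≤ f x) (hint : ∫ x, f x = 1)
    (hf : SupportedInUnitDisk f) (θ θ' : ℝ) {z : ℝ} (hz : z ∈ Ioo 0 1) :
    quantileOf (lineProj f θ') z ≤ quantileOf (lineProj f θ) z + |θ - θ'| := by
  have hfi : Integrable f := .of_integral_ne_zero (by simp [hint])
  refine csInf_setOf_le_le_add (fun t => ?_) ⟨1, le_cdfOf_lineProj_one hint hf θ hz.2.le⟩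
    (bddBelow_setOf_le_cdfOf_lineProj hint hf θ' hz.1)
  rw [cdfOf_lineProj hfi, cdfOf_lineProj hfi]
  exact setIntegral_halfPlane_le_add_abs_sub hpos hf hfi θ θ' t

lemma abs_quantileOf_lineProj_sub_le (hpos : ∀ x, 0 ≤ f x) (hint : ∫ x, f x = 1)
    (hf : SupportedInUnitDisk f) (θ θ' : ℝ) {z : ℝ} (hz : z ∈ Ioo 0 1) :
    |quantileOf (lineProj f θ) z - quantileOf (lineProj f θ') z| ≤ |θ - θ'| := by
  have h := quantileOf_lineProj_le_add_abs_sub hpos hint hf θ θ' hz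
  have h' := quantileOf_lineProj_le_add_abs_sub hpos hint hf θ' θ hz
  rw [abs_sub_comm θ'] at h'
  exact abs_sub_le_iff.mpr ⟨by linarith, by linarith⟩

end QuantileOfLineProj

lemma wassersteinPow_two_eq (μ ν : ℝ → ℝ) :
    wassersteinPow 2 μ ν = ∫ z in Ioo 0 1, (quantileOf μ z - quantileOf ν z) ^ 2 := by
  simp only [wassersteinPow, rpow_two, sq_abs]

section WassersteinOfLineProj

variable {f g : ℝ × ℝ → ℝ}

lemma abs_quantileOf_lineProj_sub_le_two (hfint : ∫ x, f x = 1) (hf : SupportedInUnitDisk f)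
    (hgint : ∫ x, g x = 1) (hg : SupportedInUnitDisk g) (θ : ℝ) {z : ℝ} (hz : z ∈ Ioo 0 1) :
    |quantileOf (lineProj f θ) z - quantileOf (lineProj g θ) z| ≤ 2 := by
  obtain ⟨hf₁, hf₂⟩ := quantileOf_lineProj_mem_Icc hfint hf θ hz
  obtain ⟨hg₁, hg₂⟩ := quantileOf_lineProj_mem_Icc hgint hg θ hz
  exact abs_le.mpr ⟨by linarith, by linarith⟩

lemma integrableOn_sq_quantileOf_lineProj_sub (hfint : ∫ x, f x = 1) (hf : SupportedInUnitDisk f)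
    (hgint : ∫ x, g x = 1) (hg : SupportedInUnitDisk g) (θ : ℝ) :
    IntegrableOn (fun z => (quantileOf (lineProj f θ) z - quantileOf (lineProj g θ) z) ^ 2)
      (Ioo 0 1) := by
  have hmeas : AEMeasurable (fun z => quantileOf (lineProj f θ) z - quantileOf (lineProj g θ) z)
      (volume.restrict (Ioo 0 1)) :=
    (aemeasurable_restrict_of_monotoneOn measurableSet_Ioo
      (monotoneOn_quantileOf_lineProj hfint hf θ)).sub
    (aemeasurable_restrict_of_monotoneOn measurableSet_Ioo
      (monotoneOn_quantileOf_lineProj hgint hg θ))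
  refine .of_bound (by simp) (hmeas.pow_const 2).aestronglyMeasurable 4 ?_
  filter_upwards [ae_restrict_mem measurableSet_Ioo] with z hz
  have h := abs_quantileOf_lineProj_sub_le_two hfint hf hgint hg θ hz
  rw [norm_pow, Real.norm_eq_abs]
  nlinarith [abs_nonneg (quantileOf (lineProj f θ) z - quantileOf (lineProj g θ) z)]

lemma lipschitzWith_wassersteinPow_two_lineProj (hfpos : ∀ x, 0 ≤ f x) (hfint : ∫ x, f x = 1)
    (hf : SupportedInUnitDisk f) (hgpos : ∀ x, 0 ≤ g x) (hgint : ∫ x, g x = 1)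
    (hg : SupportedInUnitDisk g) :
    LipschitzWith 8 fun θ => wassersteinPow 2 (lineProj f θ) (lineProj g θ) := by
  refine LipschitzWith.of_dist_le_mul fun θ θ' => ?_
  simp only [dist_eq, NNReal.coe_ofNat, wassersteinPow_two_eq]
  rw [← integral_sub (integrableOn_sq_quantileOf_lineProj_sub hfint hf hgint hg θ)
    (integrableOn_sq_quantileOf_lineProj_sub hfint hf hgint hg θ')]
  have hbound : ∀ z ∈ Ioo (0:ℝ) 1,
      ‖(quantileOf (lineProj f θ) z - quantileOf (lineProj g θ) z) ^ 2
        - (quantileOf (lineProj f θ') z - quantileOf (lineProj g θ') z) ^ 2‖ ≤ 8 * |θ - θ'| := by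
    intro z hz
    have hfθ := abs_quantileOf_lineProj_sub_le hfpos hfint hf θ θ' hz
    have hgθ := abs_quantileOf_lineProj_sub_le hgpos hgint hg θ θ' hz
    have hsq := abs_sq_sub_sq_le (abs_quantileOf_lineProj_sub_le_two hfint hf hgint hg θ hz)
      (abs_quantileOf_lineProj_sub_le_two hfint hf hgint hg θ' hz)
    rw [sub_sub_sub_comm] at hsq
    rw [Real.norm_eq_abs]
    linarith [abs_sub (quantileOf (lineProj f θ) z - quantileOf (lineProj f θ') z)
      (quantileOf (lineProj g θ) z - quantileOf (lineProj g θ') z)]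
  simpa using norm_setIntegral_le_of_norm_le_const (μ := volume) (by simp) hbound

end WassersteinOfLineProj

/-- Uniform angular quadrature error. For probability densities `f, g` supported on the closed
unit disk, with `H(θ) = d_{W2}²(P_θ f, P_θ g)` and the uniform grid `θ_k = 2πk/n`,
`|(1/2π) ∫₀^{2π} H(θ) dθ − (1/n) Σ_{k<n} H(θ_k)| ≤ 8π/n`. -/
theorem angular_quadrature_error
    (f g : ℝ × ℝ → ℝ)
    (hfnonneg : ∀ x, 0 ≤ f x) (hgnonneg : ∀ x, 0 ≤ g x)
    (hfint : ∫ x : ℝ × ℝ, f x = 1) (hgint : ∫ x : ℝ × ℝ, g x = 1)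
    (hfsupp : ∀ x : ℝ × ℝ, 1 < x.1 ^ 2 + x.2 ^ 2 → f x = 0)
    (hgsupp : ∀ x : ℝ × ℝ, 1 < x.1 ^ 2 + x.2 ^ 2 → g x = 0)
    (n : ℕ) (hn : 1 ≤ n) :
    |(1 / (2 * π)) * (∫ θ in (0:ℝ)..(2 * π),
        wassersteinPow 2 (lineProj f θ) (lineProj g θ))
      - (1 / n) * ∑ k ∈ Finset.range n,
          wassersteinPow 2 (lineProj f (2 * π * k / n)) (lineProj g (2 * π * k / n))|
      ≤ 8 * π / n := by
  have hH := lipschitzWith_wassersteinPow_two_lineProj hfnonneg hfint hfsupp hgnonneg hgint hgsupp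
  have h := hH.abs_average_sub_uniformRiemannMean_le two_pi_pos (n := n) (by omega)
  simp only [zero_add, sub_zero] at h
  calc _ ≤ _ := h
    _ = 8 * π / n := by
      push_cast
      ring
end

section
/- Let μ, ν be probability densities on an interval [a, b]. Then the 1-D 2-Wasserstein distance satisfies the Hölder-type bound d_{W2}(μ, ν) ≤ (√2/2) · (b − a) · (∫_a^b |μ(x) − ν(x)| dx)^{1/2}; equivalently, ∫₀¹ |Q_μ(z) − Q_ν(z)|² dz ≤ ((b − a)²/2) · ∫_a^b |μ(x) − ν(x)| dx. -/
open MeasureTheory Real Set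

open scoped symmDiff

/-!
Both quantile functions take values in `[a, b]`, so `|Q_μ - Q_ν|² ≤ (b - a) |Q_μ - Q_ν|` and it
suffices to bound `W₁`. In one dimension `∫₀¹ |Q_μ - Q_ν|` and `∫ |F_μ - F_ν|` are both the area of
the symmetric difference of the regions `{z ≤ F_μ t}` and `{z ≤ F_ν t}` in `(0, 1) × ℝ`, sliced
in `t` resp. in `z`. Finally `F_μ - F_ν` vanishes outside `[a, b]`, and since `μ - ν` has total
mass zero, `F_μ t - F_ν t = ∫_{≤ t} (μ - ν) = -∫_{> t} (μ - ν)` is at most half of `‖μ - ν‖₁`.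
-/

theorem volume_Ici_symmDiff_Ici (p q : ℝ) : volume (Ici p ∆ Ici q) = ENNReal.ofReal |p - q| := by
  rcases le_total p q with h | h
  · rw [symmDiff_of_ge (Ici_subset_Ici.2 h), Ici_sdiff_Ici, Real.volume_Ico, abs_sub_comm,
      abs_of_nonneg (sub_nonneg.2 h)]
  · rw [symmDiff_of_le (Ici_subset_Ici.2 h), Ici_sdiff_Ici, Real.volume_Ico,
      abs_of_nonneg (sub_nonneg.2 h)]

theorem volume_Iic_symmDiff_Iic (p q : ℝ) : volume (Iic p ∆ Iic q) = ENNReal.ofReal |p - q| := by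
  rcases le_total p q with h | h
  · rw [symmDiff_of_le (Iic_subset_Iic.2 h), Iic_sdiff_Iic, Real.volume_Ioc, abs_sub_comm,
      abs_of_nonneg (sub_nonneg.2 h)]
  · rw [symmDiff_of_ge (Iic_subset_Iic.2 h), Iic_sdiff_Iic, Real.volume_Ioc,
      abs_of_nonneg (sub_nonneg.2 h)]

theorem volume_restrict_Ioo_Iic_symmDiff_Iic {p q : ℝ} (hp : p ∈ Icc (0 : ℝ) 1)
    (hq : q ∈ Icc (0 : ℝ) 1) :
    volume.restrict (Ioo 0 1) (Iic p ∆ Iic q) = ENNReal.ofReal |p - q| := by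
  have hsub : Iic p ∆ Iic q ⊆ Ioc 0 1 := by
    rintro x (⟨hxp, hxq⟩ | ⟨hxq, hxp⟩) <;> simp only [mem_Iic, not_le] at * <;>
      exact ⟨by linarith [hp.1, hq.1], by linarith [hp.2, hq.2]⟩
  rw [Measure.restrict_congr_set Ioo_ae_eq_Ioc, Measure.restrict_eq_self _ hsub,
    volume_Iic_symmDiff_Iic]

theorem monotoneOn_of_le_iff {F Q : ℝ → ℝ} {s : Set ℝ} (hQ : ∀ z ∈ s, ∀ t, Q z ≤ t ↔ z ≤ F t) :
    MonotoneOn Q s := fun z hz z' hz' hzz' =>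
  (hQ z hz _).2 (hzz'.trans ((hQ z' hz' _).1 le_rfl))

theorem lintegral_abs_sub_eq_of_le_iff {F G Q R : ℝ → ℝ} (hF : Measurable F) (hG : Measurable G)
    (hF01 : ∀ t, F t ∈ Icc (0 : ℝ) 1) (hG01 : ∀ t, G t ∈ Icc (0 : ℝ) 1)
    (hQ : ∀ z ∈ Ioo (0 : ℝ) 1, ∀ t, Q z ≤ t ↔ z ≤ F t)
    (hR : ∀ z ∈ Ioo (0 : ℝ) 1, ∀ t, R z ≤ t ↔ z ≤ G t) :
    ∫⁻ z in Ioo 0 1, ENNReal.ofReal |Q z - R z| = ∫⁻ t, ENNReal.ofReal |F t - G t| := by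
  set S := {p : ℝ × ℝ | p.1 ≤ F p.2} ∆ {p : ℝ × ℝ | p.1 ≤ G p.2}
  have hS : MeasurableSet S :=
    (measurableSet_le measurable_fst (hF.comp measurable_snd)).symmDiff
      (measurableSet_le measurable_fst (hG.comp measurable_snd))
  calc ∫⁻ z in Ioo 0 1, ENNReal.ofReal |Q z - R z|
      = (volume.restrict (Ioo 0 1)).prod volume S := by
        rw [Measure.prod_apply hS]
        refine setLIntegral_congr_fun measurableSet_Ioo fun z hz => ?_
        have hslice : Prod.mk z ⁻¹' S = Ici (Q z) ∆ Ici (R z) := by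
          ext t; simp [S, mem_symmDiff, hQ z hz t, hR z hz t]
        rw [hslice, volume_Ici_symmDiff_Ici]
    _ = ∫⁻ t, ENNReal.ofReal |F t - G t| := by
        rw [Measure.prod_apply_symm hS]
        refine lintegral_congr fun t => ?_
        have hslice : (fun z => (z, t)) ⁻¹' S = Iic (F t) ∆ Iic (G t) := by
          ext z; simp [S, mem_symmDiff]
        rw [hslice, volume_restrict_Ioo_Iic_symmDiff_Iic (hF01 t) (hG01 t)]

theorem setIntegral_abs_sub_eq_integral_abs_sub_of_le_iff {F G Q R : ℝ → ℝ} (hF : Measurable F)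
    (hG : Measurable G) (hF01 : ∀ t, F t ∈ Icc (0 : ℝ) 1) (hG01 : ∀ t, G t ∈ Icc (0 : ℝ) 1)
    (hQ : ∀ z ∈ Ioo (0 : ℝ) 1, ∀ t, Q z ≤ t ↔ z ≤ F t)
    (hR : ∀ z ∈ Ioo (0 : ℝ) 1, ∀ t, R z ≤ t ↔ z ≤ G t) :
    ∫ z in Ioo 0 1, |Q z - R z| = ∫ t, |F t - G t| := by
  have hQR : AEStronglyMeasurable (fun z => |Q z - R z|) (volume.restrict (Ioo 0 1)) :=
    ((aemeasurable_restrict_of_monotoneOn measurableSet_Ioo (monotoneOn_of_le_iff hQ)).sub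
      (aemeasurable_restrict_of_monotoneOn measurableSet_Ioo
        (monotoneOn_of_le_iff hR))).abs.aestronglyMeasurable
  have hFG : AEStronglyMeasurable (fun t => |F t - G t|) volume :=
    (hF.sub hG).abs.aestronglyMeasurable
  rw [integral_eq_lintegral_of_nonneg_ae (ae_of_all _ fun _ => abs_nonneg _) hQR,
    integral_eq_lintegral_of_nonneg_ae (ae_of_all _ fun _ => abs_nonneg _) hFG,
    lintegral_abs_sub_eq_of_le_iff hF hG hF01 hG01 hQ hR]

theorem abs_setIntegral_le_half_integral_abs {α : Type*} [MeasurableSpace α] {m : Measure α}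
    {g : α → ℝ} (hg : Integrable g m) (hg0 : ∫ x, g x ∂m = 0) {s : Set α}
    (hs : MeasurableSet s) : |∫ x in s, g x ∂m| ≤ (∫ x, |g x| ∂m) / 2 := by
  have hcompl : ∫ x in s, g x ∂m = -∫ x in sᶜ, g x ∂m := by
    linarith [integral_add_compl hs hg]
  calc |∫ x in s, g x ∂m| = (|∫ x in s, g x ∂m| + |∫ x in sᶜ, g x ∂m|) / 2 := by
        rw [hcompl, abs_neg]
        ring
    _ ≤ ((∫ x in s, |g x| ∂m) + ∫ x in sᶜ, |g x| ∂m) / 2 := by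
        gcongr <;> exact abs_integral_le_integral_abs
    _ = (∫ x, |g x| ∂m) / 2 := by rw [integral_add_compl hs hg.abs]

theorem csInf_setOf_le_le_iff {F : ℝ → ℝ} (hmono : Monotone F) (hcont : Continuous F) {z : ℝ}
    (hne : {t | z ≤ F t}.Nonempty) (hbdd : BddBelow {t | z ≤ F t}) (t : ℝ) :
    sInf {t | z ≤ F t} ≤ t ↔ z ≤ F t :=
  ⟨fun h => le_trans ((isClosed_le continuous_const hcont).csInf_mem hne hbdd) (hmono h),
    fun h => csInf_le hbdd h⟩

theorem integral_eq_intervalIntegral_of_eq_zero {a b : ℝ} {g : ℝ → ℝ} (hab : a ≤ b)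
    (hg : ∀ x, x ∉ Icc a b → g x = 0) : ∫ x, g x = ∫ x in a..b, g x := by
  rw [intervalIntegral.integral_of_le hab, ← integral_Icc_eq_integral_Ioc,
    setIntegral_eq_integral_of_forall_compl_eq_zero hg]

theorem continuous_cdfOf {f : ℝ → ℝ} (hf : Integrable f) : Continuous (cdfOf f) := by
  have hprim : cdfOf f = fun t => cdfOf f 0 + ∫ x in (0 : ℝ)..t, f x := by
    ext t
    rw [← intervalIntegral.integral_Iic_sub_Iic hf.integrableOn hf.integrableOn, cdfOf, cdfOf,
      add_sub_cancel]
  rw [hprim]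
  exact continuous_const.add (hf.continuous_primitive 0)

structure IsProbDensityOn (a b : ℝ) (f : ℝ → ℝ) : Prop where
  nonneg : ∀ x, 0 ≤ f x
  eq_zero_of_notMem : ∀ x, x ∉ Icc a b → f x = 0
  intervalIntegral_eq_one : ∫ x in a..b, f x = 1

namespace IsProbDensityOn

variable {a b : ℝ} {f : ℝ → ℝ}

theorem le (hf : IsProbDensityOn a b f) : a ≤ b := by
  by_contra h
  have hzero : ∀ x, f x = 0 := fun x =>
    hf.eq_zero_of_notMem x fun hx => h (hx.1.trans hx.2)
  simpa [hzero] using hf.intervalIntegral_eq_one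

theorem integrable (hf : IsProbDensityOn a b f) : Integrable f := by
  have hIcc : IntegrableOn f (Icc a b) :=
    (intervalIntegrable_iff_integrableOn_Icc_of_le hf.le).1
      (intervalIntegral.intervalIntegrable_of_integral_ne_zero
        (by rw [hf.intervalIntegral_eq_one]; exact one_ne_zero))
  exact (integrableOn_iff_integrable_of_support_subset
    fun x hx => by_contra fun h => hx (hf.eq_zero_of_notMem x h)).1 hIcc

theorem integral_eq_one (hf : IsProbDensityOn a b f) : ∫ x, f x = 1 :=
  (integral_eq_intervalIntegral_of_eq_zero hf.le hf.eq_zero_of_notMem).trans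
    hf.intervalIntegral_eq_one

theorem cdfOf_eq_zero (hf : IsProbDensityOn a b f) {t : ℝ} (ht : t < a) : cdfOf f t = 0 :=
  setIntegral_eq_zero_of_forall_eq_zero fun x hx =>
    hf.eq_zero_of_notMem x fun h => (lt_of_le_of_lt (mem_Iic.1 hx) ht).not_ge h.1

theorem cdfOf_eq_one (hf : IsProbDensityOn a b f) {t : ℝ} (ht : b ≤ t) : cdfOf f t = 1 :=
  (setIntegral_eq_integral_of_forall_compl_eq_zero fun x hx =>
    hf.eq_zero_of_notMem x fun h => hx (h.2.trans ht)).trans hf.integral_eq_one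

theorem monotone_cdfOf (hf : IsProbDensityOn a b f) : Monotone (cdfOf f) := fun _ _ h =>
  setIntegral_mono_set hf.integrable.integrableOn (ae_of_all _ hf.nonneg)
    (Iic_subset_Iic.2 h).eventuallyLE

theorem cdfOf_mem_Icc (hf : IsProbDensityOn a b f) (t : ℝ) : cdfOf f t ∈ Icc (0 : ℝ) 1 :=
  ⟨setIntegral_nonneg measurableSet_Iic fun x _ => hf.nonneg x,
    (hf.monotone_cdfOf (le_max_left t b)).trans (hf.cdfOf_eq_one (le_max_right t b)).le⟩

theorem quantileOf_le_iff (hf : IsProbDensityOn a b f) {z : ℝ} (hz : z ∈ Ioo (0 : ℝ) 1) (t : ℝ) :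
    quantileOf f z ≤ t ↔ z ≤ cdfOf f t := by
  refine csInf_setOf_le_le_iff hf.monotone_cdfOf (continuous_cdfOf hf.integrable)
    ⟨b, ?_⟩ ⟨a, fun s hs => not_lt.1 fun hsa => ?_⟩ t
  · show z ≤ cdfOf f b
    rw [hf.cdfOf_eq_one le_rfl]
    exact hz.2.le
  · have hzs : z ≤ cdfOf f s := hs
    rw [hf.cdfOf_eq_zero hsa] at hzs
    exact hz.1.not_ge hzs

theorem quantileOf_mem_Icc (hf : IsProbDensityOn a b f) {z : ℝ} (hz : z ∈ Ioo (0 : ℝ) 1) :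
    quantileOf f z ∈ Icc a b := by
  refine ⟨not_lt.1 fun h => ?_, (hf.quantileOf_le_iff hz b).2 ?_⟩
  · have hle := (hf.quantileOf_le_iff hz _).1 le_rfl
    rw [hf.cdfOf_eq_zero h] at hle
    exact hz.1.not_ge hle
  · rw [hf.cdfOf_eq_one le_rfl]
    exact hz.2.le

theorem aemeasurable_quantileOf (hf : IsProbDensityOn a b f) :
    AEMeasurable (quantileOf f) (volume.restrict (Ioo 0 1)) :=
  aemeasurable_restrict_of_monotoneOn measurableSet_Ioo
    (monotoneOn_of_le_iff fun _ hz => hf.quantileOf_le_iff hz)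

end IsProbDensityOn

section TwoDensities

variable {a b : ℝ} {μ ν : ℝ → ℝ}

theorem abs_cdfOf_sub_cdfOf_le (hμ : IsProbDensityOn a b μ) (hν : IsProbDensityOn a b ν) (t : ℝ) :
    |cdfOf μ t - cdfOf ν t| ≤ (∫ x in a..b, |μ x - ν x|) / 2 := by
  have hint : Integrable fun x => μ x - ν x := hμ.integrable.sub hν.integrable
  rw [cdfOf, cdfOf, ← integral_sub hμ.integrable.integrableOn hν.integrable.integrableOn,
    ← integral_eq_intervalIntegral_of_eq_zero hμ.le fun x hx => by
      rw [hμ.eq_zero_of_notMem x hx, hν.eq_zero_of_notMem x hx, sub_zero, abs_zero]]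
  refine abs_setIntegral_le_half_integral_abs hint ?_ measurableSet_Iic
  rw [integral_sub hμ.integrable hν.integrable, hμ.integral_eq_one, hν.integral_eq_one, sub_self]

theorem integral_abs_cdfOf_sub_cdfOf_le (hμ : IsProbDensityOn a b μ) (hν : IsProbDensityOn a b ν) :
    ∫ t, |cdfOf μ t - cdfOf ν t| ≤ (b - a) * ((∫ x in a..b, |μ x - ν x|) / 2) := by
  have hsupp : ∀ t, t ∉ Icc a b → |cdfOf μ t - cdfOf ν t| = 0 := by
    intro t ht
    rcases not_and_or.1 ht with hta | htb
    · rw [hμ.cdfOf_eq_zero (not_le.1 hta), hν.cdfOf_eq_zero (not_le.1 hta), sub_self, abs_zero]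
    · rw [hμ.cdfOf_eq_one (not_le.1 htb).le, hν.cdfOf_eq_one (not_le.1 htb).le, sub_self,
        abs_zero]
  rw [← setIntegral_eq_integral_of_forall_compl_eq_zero hsupp]
  calc ∫ t in Icc a b, |cdfOf μ t - cdfOf ν t|
      ≤ ‖∫ t in Icc a b, |cdfOf μ t - cdfOf ν t|‖ := le_abs_self _
    _ ≤ (∫ x in a..b, |μ x - ν x|) / 2 * volume.real (Icc a b) :=
        norm_setIntegral_le_of_norm_le_const measure_Icc_lt_top fun t _ => by
          rw [Real.norm_eq_abs, abs_abs]
          exact abs_cdfOf_sub_cdfOf_le hμ hν t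
    _ = (b - a) * ((∫ x in a..b, |μ x - ν x|) / 2) := by
        rw [Real.volume_real_Icc_of_le hμ.le, mul_comm]

theorem setIntegral_abs_quantileOf_sub_quantileOf_le (hμ : IsProbDensityOn a b μ)
    (hν : IsProbDensityOn a b ν) :
    ∫ z in Ioo 0 1, |quantileOf μ z - quantileOf ν z| ≤
      (b - a) * ((∫ x in a..b, |μ x - ν x|) / 2) := by
  rw [setIntegral_abs_sub_eq_integral_abs_sub_of_le_iff
    (continuous_cdfOf hμ.integrable).measurable (continuous_cdfOf hν.integrable).measurable
    hμ.cdfOf_mem_Icc hν.cdfOf_mem_Icc (fun _ hz => hμ.quantileOf_le_iff hz)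
    (fun _ hz => hν.quantileOf_le_iff hz)]
  exact integral_abs_cdfOf_sub_cdfOf_le hμ hν

theorem wassersteinPow_two_le (hμ : IsProbDensityOn a b μ) (hν : IsProbDensityOn a b ν) :
    wassersteinPow 2 μ ν ≤ (b - a) ^ 2 / 2 * ∫ x in a..b, |μ x - ν x| := by
  have hbound : ∀ z ∈ Ioo (0 : ℝ) 1, |quantileOf μ z - quantileOf ν z| ≤ b - a := fun z hz => by
    obtain ⟨hμa, hμb⟩ := hμ.quantileOf_mem_Icc hz
    obtain ⟨hνa, hνb⟩ := hν.quantileOf_mem_Icc hz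
    exact abs_sub_le_iff.2 ⟨by linarith, by linarith⟩
  have hint : IntegrableOn (fun z => |quantileOf μ z - quantileOf ν z|) (Ioo 0 1) :=
    Integrable.mono' (integrable_const (b - a))
      (hμ.aemeasurable_quantileOf.sub hν.aemeasurable_quantileOf).abs.aestronglyMeasurable
      (ae_restrict_of_forall_mem measurableSet_Ioo fun z hz => by
        rw [Real.norm_eq_abs, abs_abs]
        exact hbound z hz)
  calc wassersteinPow 2 μ ν = ∫ z in Ioo 0 1, |quantileOf μ z - quantileOf ν z| ^ 2 := by
        simp only [wassersteinPow, Real.rpow_two]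
    _ ≤ ∫ z in Ioo 0 1, (b - a) * |quantileOf μ z - quantileOf ν z| :=
        integral_mono_of_nonneg (ae_of_all _ fun _ => sq_nonneg _) (hint.const_mul _)
          (ae_restrict_of_forall_mem measurableSet_Ioo fun z hz => by
            dsimp only
            rw [sq]
            exact mul_le_mul_of_nonneg_right (hbound z hz) (abs_nonneg _))
    _ = (b - a) * ∫ z in Ioo 0 1, |quantileOf μ z - quantileOf ν z| := integral_const_mul _ _
    _ ≤ (b - a) * ((b - a) * ((∫ x in a..b, |μ x - ν x|) / 2)) :=
        mul_le_mul_of_nonneg_left (setIntegral_abs_quantileOf_sub_quantileOf_le hμ hν)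
          (sub_nonneg.2 hμ.le)
    _ = (b - a) ^ 2 / 2 * ∫ x in a..b, |μ x - ν x| := by ring

end TwoDensities

theorem wasserstein_two_eq_sqrt (μ ν : ℝ → ℝ) : wasserstein 2 μ ν = √(wassersteinPow 2 μ ν) := by
  rw [wasserstein, Real.sqrt_eq_rpow, one_div]

theorem w2_holder_L1_general
    (a b : ℝ) (μ ν : ℝ → ℝ)
    (hμnonneg : ∀ x, 0 ≤ μ x) (hνnonneg : ∀ x, 0 ≤ ν x)
    (hμsupp : ∀ x, x ∉ Set.Icc a b → μ x = 0) (hνsupp : ∀ x, x ∉ Set.Icc a b → ν x = 0)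
    (hμint : ∫ x in a..b, μ x = 1) (hνint : ∫ x in a..b, ν x = 1) :
    wasserstein 2 μ ν ≤ (Real.sqrt 2 / 2) * (b - a) * Real.sqrt (∫ x in a..b, |μ x - ν x|) ∧
    wassersteinPow 2 μ ν ≤ ((b - a) ^ 2 / 2) * ∫ x in a..b, |μ x - ν x| := by
  have hμ : IsProbDensityOn a b μ := ⟨hμnonneg, hμsupp, hμint⟩
  have hν : IsProbDensityOn a b ν := ⟨hνnonneg, hνsupp, hνint⟩
  have hW := wassersteinPow_two_le hμ hν
  refine ⟨?_, hW⟩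
  have hconst : (b - a) ^ 2 / 2 = (√2 / 2 * (b - a)) ^ 2 := by
    rw [mul_pow, div_pow, Real.sq_sqrt zero_le_two]
    ring
  have hnonneg : 0 ≤ √2 / 2 * (b - a) := mul_nonneg (by positivity) (sub_nonneg.2 hμ.le)
  rw [wasserstein_two_eq_sqrt]
  calc √(wassersteinPow 2 μ ν) ≤ √((b - a) ^ 2 / 2 * ∫ x in a..b, |μ x - ν x|) :=
        Real.sqrt_le_sqrt hW
    _ = √2 / 2 * (b - a) * √(∫ x in a..b, |μ x - ν x|) := by
        rw [Real.sqrt_mul (by positivity), hconst, Real.sqrt_sq hnonneg]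

/-- `W₂` is Hölder continuous with respect to `L¹`: for probability densities `μ, ν` on `[a, b]`,
`d_{W2}(μ, ν) ≤ (√2/2)(b − a) ‖μ − ν‖_{L¹([a,b])}^{1/2}`, equivalently
`∫₀¹ |Q_μ − Q_ν|² ≤ ((b−a)²/2) ‖μ − ν‖_{L¹([a,b])}`. -/
theorem w2_holder_L1
    (a b : ℝ) (hab : a < b) (μ ν : ℝ → ℝ)
    (hμnonneg : ∀ x, 0 ≤ μ x) (hνnonneg : ∀ x, 0 ≤ ν x)
    (hμsupp : ∀ x, x ∉ Set.Icc a b → μ x = 0) (hνsupp : ∀ x, x ∉ Set.Icc a b → ν x = 0)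
    (hμint : ∫ x in a..b, μ x = 1) (hνint : ∫ x in a..b, ν x = 1) :
    wasserstein 2 μ ν ≤ (Real.sqrt 2 / 2) * (b - a) * Real.sqrt (∫ x in a..b, |μ x - ν x|) ∧
    wassersteinPow 2 μ ν ≤ ((b - a) ^ 2 / 2) * ∫ x in a..b, |μ x - ν x| :=
  w2_holder_L1_general a b μ ν hμnonneg hνnonneg hμsupp hνsupp hμint hνint
end

section
/- Let f : ℝ² → [0, ∞) be K-Lipschitz with ∫_{ℝ²} f(x) dx = 1. Then sup_{x ∈ ℝ²} f(x) ≤ (3K²/π)^{1/3}. -/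
open MeasureTheory Real Set Metric Module

/-!
A `K`-Lipschitz `f ≥ 0` lies above the cone `x ↦ (f x₀ - K ‖x - x₀‖)⁺` of height `M = f x₀`.
In polar coordinates the cone over a `d`-dimensional space has integral
`μ(B₁) M^(d+1) / ((d+1) K^d)`, which in the plane is `π M³ / (3K²)`; bounding it by `∫ f = 1`
gives `M³ ≤ 3K²/π`.
-/

lemma integral_Ioi_pow_mul_max_sub_mul (n : ℕ) {M K : ℝ} (hM : 0 ≤ M) (hK : 0 < K) :
    ∫ y in Ioi (0 : ℝ), y ^ n * max (M - K * y) 0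
      = M ^ (n + 2) / ((n + 1) * (n + 2) * K ^ (n + 1)) := by
  have hvanish : ∀ y ∈ Ioi (0 : ℝ) \ Ioc 0 (M / K), y ^ n * max (M - K * y) 0 = 0 := by
    rintro y ⟨hy0, hy⟩
    simp only [mem_Ioc, not_and, not_le] at hy
    have : M ≤ K * y := ((div_lt_iff₀' hK).mp (hy hy0)).le
    simp [this]
  have hlinear : EqOn (fun y => y ^ n * max (M - K * y) 0) (fun y => M * y ^ n - K * y ^ (n + 1))
      (uIcc 0 (M / K)) := by
    intro y hy
    rw [uIcc_of_le (by positivity), mem_Icc, le_div_iff₀ hK] at hy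
    simp only
    rw [max_eq_left (by linarith)]
    ring
  rw [setIntegral_eq_of_subset_of_forall_sdiff_eq_zero measurableSet_Ioi Ioc_subset_Ioi_self
      hvanish, ← intervalIntegral.integral_of_le (by positivity),
    intervalIntegral.integral_congr hlinear, intervalIntegral.integral_sub (by apply Continuous.intervalIntegrable; fun_prop)
      (by apply Continuous.intervalIntegrable; fun_prop),
    intervalIntegral.integral_const_mul, intervalIntegral.integral_const_mul, integral_pow,
    integral_pow]
  simp only [div_pow, zero_pow (Nat.succ_ne_zero _), sub_zero, Nat.cast_add, Nat.cast_one]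
  field_simp
  ring

section AddHaar

variable {E : Type*} [NormedAddCommGroup E] [NormedSpace ℝ E] [FiniteDimensional ℝ E]
  [Nontrivial E] [MeasurableSpace E] [BorelSpace E] (μ : Measure E) [μ.IsAddHaarMeasure]

lemma integral_max_sub_mul_norm_sub (c : E) {M K : ℝ} (hM : 0 ≤ M) (hK : 0 < K) :
    ∫ x, max (M - K * ‖x - c‖) 0 ∂μ
      = μ.real (ball 0 1) * M ^ (finrank ℝ E + 1) / ((finrank ℝ E + 1) * K ^ finrank ℝ E) := by
  obtain ⟨n, hn⟩ : ∃ n, finrank ℝ E = n + 1 := Nat.exists_eq_add_one.mpr finrank_pos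
  rw [integral_sub_right_eq_self (fun x => max (M - K * ‖x‖) 0) c,
    integral_fun_norm_addHaar μ (fun r => max (M - K * r) 0)]
  simp only [smul_eq_mul, nsmul_eq_mul, hn, Nat.add_sub_cancel,
    integral_Ioi_pow_mul_max_sub_mul n hM hK]
  push_cast
  field_simp
  ring

theorem measureReal_ball_mul_pow_div_le_integral {f : E → ℝ} (hf0 : ∀ x, 0 ≤ f x)
    (hf : Integrable f μ) {K : ℝ} (hK : 0 < K) (x₀ : E)
    (hcone : ∀ x, f x₀ - K * ‖x - x₀‖ ≤ f x) :
    μ.real (ball 0 1) * f x₀ ^ (finrank ℝ E + 1) / ((finrank ℝ E + 1) * K ^ finrank ℝ E)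
      ≤ ∫ x, f x ∂μ := by
  rw [← integral_max_sub_mul_norm_sub μ x₀ (hf0 x₀) hK]
  exact integral_mono_of_nonneg (.of_forall fun x => le_max_right _ _) hf
    (.of_forall fun x => max_le (hcone x) (hf0 x))

lemma pos_of_abs_sub_le_mul_norm_of_integral_ne_zero {f : E → ℝ} {K : ℝ}
    (hlip : ∀ x y, |f x - f y| ≤ K * ‖x - y‖) (hf : ∫ x, f x ∂μ ≠ 0) : 0 < K := by
  by_contra! hK
  have hconst : f = fun _ => f 0 := funext fun x => sub_eq_zero.mp <| abs_nonpos_iff.mp <|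
    (hlip x 0).trans (mul_nonpos_of_nonpos_of_nonneg hK (norm_nonneg _))
  apply hf
  rw [hconst, integral_const, measureReal_def, measure_univ_of_isAddLeftInvariant]
  simp

end AddHaar

/-- If `f : ℝ² → [0, ∞)` is `K`-Lipschitz (for the Euclidean norm) with `∫ f = 1`, then
`sup f ≤ (3K²/π)^{1/3}`. -/
theorem lipschitz_density_sup_bound
    (f : ℝ × ℝ → ℝ) (K : ℝ)
    (hfnonneg : ∀ x, 0 ≤ f x)
    (hlip : ∀ x y : ℝ × ℝ,
      |f x - f y| ≤ K * Real.sqrt ((x.1 - y.1) ^ 2 + (x.2 - y.2) ^ 2))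
    (hint : ∫ x : ℝ × ℝ, f x = 1) :
    ∀ x : ℝ × ℝ, f x ≤ (3 * K ^ 2 / π) ^ ((1:ℝ) / 3) := by
  rintro ⟨a, b⟩
  set F : ℂ → ℝ := f ∘ Complex.equivRealProd
  have hF : ∫ z, F z = 1 := by
    rw [← hint]
    exact Complex.volume_preserving_equiv_real_prod.integral_comp' (g := f)
  have hlipF : ∀ z w, |F z - F w| ≤ K * ‖z - w‖ := fun z w => by
    simpa [F, ← dist_eq_norm, Complex.dist_eq_re_im] using hlip (z.re, z.im) (w.re, w.im)
  have hK : 0 < K :=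
    pos_of_abs_sub_le_mul_norm_of_integral_ne_zero volume hlipF (by rw [hF]; exact one_ne_zero)
  have hcone : ∀ z, F ⟨a, b⟩ - K * ‖z - ⟨a, b⟩‖ ≤ F z := fun z => by
    linarith [neg_abs_le (F z - F ⟨a, b⟩), hlipF z ⟨a, b⟩]
  have hvol : π * f (a, b) ^ 3 / (3 * K ^ 2) ≤ 1 := by
    have := measureReal_ball_mul_pow_div_le_integral volume (f := F) (fun z => hfnonneg _)
      (Integrable.of_integral_ne_zero (by rw [hF]; exact one_ne_zero)) hK _ hcone
    rw [hF] at this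
    norm_num [measureReal_def, Complex.finrank_real_complex] at this
    exact this
  rw [div_le_one (by positivity)] at hvol
  rw [one_div, le_rpow_inv_iff_of_pos (hfnonneg _) (by positivity) (by norm_num), rpow_ofNat,
    le_div_iff₀ pi_pos]
  linarith
end

section
/- Let f : ℝ² → ℝ be K-Lipschitz and supported in the closed unit disk, and let θ ∈ ℝ. Then the line projection G(s) = P_θ f(s) is Lipschitz on [−1, 1], differentiable almost everywhere with G'(s) = ∫_ℝ ∇f(s(cos θ, sin θ) + t(−sin θ, cos θ)) · (cos θ, sin θ) dt for a.e. s, and ∫_{-1}^1 |G'(s)|² ds ≤ 2π K², i.e. ‖(P_θ f)'‖_{L²(−1,1)} ≤ √(2π) · K. -/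
open MeasureTheory Real Set

/-!
Differentiating under the integral sign, `(P_θ f)'(s)` is the integral along the line at
signed distance `s` of the directional derivative of `f` in the direction `(cos θ, sin θ)`;
this exists for a.e. `s` because `f` is differentiable a.e. (Rademacher) and rotations preserve
null sets (Fubini). The integrand is bounded by `K` and vanishes off the chord
of the unit disk, of length `2√(1 - s²)`, so `|(P_θ f)'(s)|² ≤ 4K²(1 - s²)`, whose integral
over `[-1, 1]` is `16K²/3 ≤ 2πK²`.
-/

open Filter Topology

noncomputable def planeRot (θ : ℝ) : ℝ × ℝ →ₗ[ℝ] ℝ × ℝ where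
  toFun p := (p.1 * cos θ - p.2 * sin θ, p.1 * sin θ + p.2 * cos θ)
  map_add' p q := by ext <;> simp only [Prod.fst_add, Prod.snd_add] <;> ring
  map_smul' r p := by
    ext <;> simp only [Prod.smul_fst, Prod.smul_snd, smul_eq_mul, RingHom.id_apply] <;> ring

@[simp]
lemma planeRot_apply (θ : ℝ) (p : ℝ × ℝ) :
    planeRot θ p = (p.1 * cos θ - p.2 * sin θ, p.1 * sin θ + p.2 * cos θ) := rfl

lemma lineProj_eq (f : ℝ × ℝ → ℝ) (θ s : ℝ) :
    lineProj f θ s = ∫ t, f (planeRot θ (s, t)) := rfl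

lemma planeRot_normSq (θ : ℝ) (p : ℝ × ℝ) :
    (planeRot θ p).1 ^ 2 + (planeRot θ p).2 ^ 2 = p.1 ^ 2 + p.2 ^ 2 := by
  simp only [planeRot_apply]
  linear_combination (p.1 ^ 2 + p.2 ^ 2) * sin_sq_add_cos_sq θ

lemma det_planeRot (θ : ℝ) : LinearMap.det (planeRot θ) = 1 := by
  rw [← LinearMap.det_toMatrix (Module.Basis.finTwoProd ℝ), Matrix.det_fin_two]
  simp [LinearMap.toMatrix_apply, Module.Basis.coe_finTwoProd_repr, ← sq]

lemma hasDerivAt_planeRot_left (θ t s : ℝ) :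
    HasDerivAt (fun x => planeRot θ (x, t)) (cos θ, sin θ) s := by
  simp only [planeRot_apply]
  exact (((hasDerivAt_id s).mul_const _).sub_const _).prodMk
    (((hasDerivAt_id s).mul_const _).add_const _) |>.congr_deriv (by simp)

lemma ae_ae_planeRot {P : ℝ × ℝ → Prop} (θ : ℝ) (h : ∀ᵐ x, P x) :
    ∀ᵐ s : ℝ, ∀ᵐ t : ℝ, P (planeRot θ (s, t)) := by
  have hrot := (Measure.LinearMap.quasiMeasurePreserving volume (planeRot θ)
    (by simp [det_planeRot])).ae h
  rw [Measure.volume_eq_prod] at hrot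
  exact Measure.ae_ae_of_ae_prod hrot

/-- The slice `t ↦ f (planeRot θ (s, t))` of a function supported in the unit disk is supported
in an interval of this length. -/
noncomputable def chordLength (s : ℝ) : ℝ := 2 * √(1 - s ^ 2)

lemma integral_chordLength_sq : ∫ s in (-1 : ℝ)..1, chordLength s ^ 2 = 16 / 3 := by
  have hsq : ∀ s ∈ uIcc (-1 : ℝ) 1, chordLength s ^ 2 = 4 - 4 * s ^ 2 := fun s hs => by
    rw [uIcc_of_le (by norm_num)] at hs
    rw [chordLength, mul_pow, sq_sqrt (by nlinarith [hs.1, hs.2])]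
    ring
  rw [intervalIntegral.integral_congr hsq, intervalIntegral.integral_sub intervalIntegrable_const
    ((intervalIntegral.intervalIntegrable_pow 2).const_mul 4), intervalIntegral.integral_const_mul]
  norm_num [integral_pow]

lemma integral_sq_le_of_abs_le_mul_chordLength {g : ℝ → ℝ} {C : ℝ}
    (hg : ∀ s ∈ Icc (-1 : ℝ) 1, |g s| ≤ C * chordLength s) :
    ∫ s in (-1 : ℝ)..1, g s ^ 2 ≤ C ^ 2 * (16 / 3) := by
  have hchord : Continuous chordLength := by unfold chordLength; fun_prop
  rw [← integral_chordLength_sq, ← intervalIntegral.integral_const_mul,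
    intervalIntegral.integral_of_le (by norm_num), intervalIntegral.integral_of_le (by norm_num)]
  refine integral_mono_of_nonneg (ae_of_all _ fun s => sq_nonneg _)
    ((continuous_const.mul (hchord.pow 2)).integrableOn_Ioc) ?_
  filter_upwards [ae_restrict_mem measurableSet_Ioc] with s hs
  rw [← sq_abs, ← mul_pow]
  exact pow_le_pow_left₀ (abs_nonneg _) (hg s (Ioc_subset_Icc_self hs)) 2

lemma norm_integral_le_of_eq_zero_off_Icc {E : Type*} [NormedAddCommGroup E] [NormedSpace ℝ E]
    {g : ℝ → E} {r C : ℝ} (hr : 0 ≤ r) (hC : ∀ t ∈ Icc (-r) r, ‖g t‖ ≤ C)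
    (hg : ∀ t ∉ Icc (-r) r, g t = 0) :
    ‖∫ t, g t‖ ≤ 2 * r * C := by
  rw [← setIntegral_eq_integral_of_forall_compl_eq_zero hg]
  refine (norm_setIntegral_le_of_norm_le_const measure_Icc_lt_top hC).trans_eq ?_
  rw [Real.volume_real_Icc_of_le (by linarith)]
  ring

lemma one_lt_sq_add_sq_of_notMem_Icc {s t r : ℝ} (hr : 0 ≤ r) (hsr : 1 ≤ s ^ 2 + r ^ 2)
    (ht : t ∉ Icc (-r) r) : 1 < s ^ 2 + t ^ 2 := by
  have hrt : r < |t| := not_le.mp fun h => ht (abs_le.mp h)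
  nlinarith [sq_abs t]

lemma fderiv_eq_zero_of_one_lt {f : ℝ × ℝ → ℝ}
    (hsupp : ∀ x : ℝ × ℝ, 1 < x.1 ^ 2 + x.2 ^ 2 → f x = 0)
    {x : ℝ × ℝ} (hx : 1 < x.1 ^ 2 + x.2 ^ 2) : fderiv ℝ f x = 0 := by
  have hopen : IsOpen {y : ℝ × ℝ | 1 < y.1 ^ 2 + y.2 ^ 2} :=
    isOpen_lt continuous_const (by fun_prop)
  have hev : f =ᶠ[𝓝 x] fun _ => 0 := eventually_of_mem (hopen.mem_nhds hx) hsupp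
  rw [hev.fderiv_eq]
  exact fderiv_const_apply 0

section EuclideanLipschitz

variable {f : ℝ × ℝ → ℝ} {K : ℝ}
  (hlip : ∀ x y : ℝ × ℝ, |f x - f y| ≤ K * √((x.1 - y.1) ^ 2 + (x.2 - y.2) ^ 2))
include hlip

lemma nonneg_of_euclidean_lipschitz : 0 ≤ K := by
  simpa using (abs_nonneg _).trans (hlip (1, 0) (0, 0))

lemma lipschitzWith_of_euclidean_lipschitz : LipschitzWith (2 * K).toNNReal f := by
  have hK := nonneg_of_euclidean_lipschitz hlip
  refine LipschitzWith.of_dist_le_mul fun x y => ?_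
  have h₁ : |x.1 - y.1| ≤ dist x y := by
    rw [Prod.dist_eq, ← Real.dist_eq]; exact le_max_left _ _
  have h₂ : |x.2 - y.2| ≤ dist x y := by
    rw [Prod.dist_eq, ← Real.dist_eq]; exact le_max_right _ _
  have hsqrt : √((x.1 - y.1) ^ 2 + (x.2 - y.2) ^ 2) ≤ 2 * dist x y := by
    rw [sqrt_le_iff]
    refine ⟨by positivity, ?_⟩
    nlinarith [sq_abs (x.1 - y.1), sq_abs (x.2 - y.2), abs_nonneg (x.1 - y.1),
      abs_nonneg (x.2 - y.2)]
  calc dist (f x) (f y) = |f x - f y| := Real.dist_eq _ _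
    _ ≤ K * (2 * dist x y) := (hlip x y).trans (by gcongr)
    _ = (2 * K).toNNReal * dist x y := by rw [Real.coe_toNNReal _ (by positivity)]; ring

lemma abs_sub_comp_planeRot_le (θ s s' t : ℝ) :
    |f (planeRot θ (s, t)) - f (planeRot θ (s', t))| ≤ K * |s - s'| := by
  have h := hlip (planeRot θ (s, t)) (planeRot θ (s', t))
  rwa [← Prod.fst_sub, ← Prod.snd_sub, ← map_sub, planeRot_normSq, Prod.mk_sub_mk, sub_self,
    zero_pow two_ne_zero, add_zero, sqrt_sq_eq_abs] at h

lemma abs_fderiv_apply_le (x v : ℝ × ℝ) (hv : v.1 ^ 2 + v.2 ^ 2 = 1) :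
    |fderiv ℝ f x v| ≤ K := by
  have hK := nonneg_of_euclidean_lipschitz hlip
  by_cases hd : DifferentiableAt ℝ f x
  · have hline : LipschitzWith K.toNNReal fun r : ℝ => f (x + r • v) := by
      refine LipschitzWith.of_dist_le_mul fun a b => ?_
      have h := hlip (x + a • v) (x + b • v)
      have hnorm : ((x + a • v).1 - (x + b • v).1) ^ 2 + ((x + a • v).2 - (x + b • v).2) ^ 2
          = (a - b) ^ 2 := by
        simp only [Prod.fst_add, Prod.snd_add, Prod.smul_fst, Prod.smul_snd, smul_eq_mul]
        linear_combination (a - b) ^ 2 * hv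
      rwa [hnorm, sqrt_sq_eq_abs, ← Real.dist_eq, ← Real.dist_eq,
        ← Real.coe_toNNReal K hK] at h
    have hderiv : HasDerivAt (fun r : ℝ => f (x + r • v)) (fderiv ℝ f x v) 0 := by
      have hray : HasDerivAt (fun r : ℝ => x + r • v) v 0 :=
        ((hasDerivAt_id (0 : ℝ)).smul_const v).const_add x |>.congr_deriv (one_smul ℝ v)
      exact HasFDerivAt.comp_hasDerivAt 0 (by simpa using hd.hasFDerivAt) hray
    simpa [hderiv.deriv, Real.coe_toNNReal K hK] using norm_deriv_le_of_lipschitz (x₀ := 0) hline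
  · simpa [fderiv_zero_of_not_differentiableAt hd] using hK

end EuclideanLipschitz

section LineProjection

variable {f : ℝ × ℝ → ℝ} {K : ℝ}
  (hlip : ∀ x y : ℝ × ℝ, |f x - f y| ≤ K * √((x.1 - y.1) ^ 2 + (x.2 - y.2) ^ 2))
  (hsupp : ∀ x : ℝ × ℝ, 1 < x.1 ^ 2 + x.2 ^ 2 → f x = 0) (θ : ℝ)

include hsupp

lemma comp_planeRot_eq_zero {s t : ℝ} (ht : t ∉ Icc (-1 : ℝ) 1) :
    f (planeRot θ (s, t)) = 0 :=
  hsupp _ <| by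
    rw [planeRot_normSq]
    exact one_lt_sq_add_sq_of_notMem_Icc zero_le_one (by nlinarith) ht

include hlip

lemma integrable_comp_planeRot (s : ℝ) : Integrable fun t => f (planeRot θ (s, t)) :=
  ((lipschitzWith_of_euclidean_lipschitz hlip).continuous.comp
    (by fun_prop)).integrable_of_hasCompactSupport
    (HasCompactSupport.intro isCompact_Icc fun _ ht => comp_planeRot_eq_zero hsupp θ ht)

lemma lipschitzWith_lineProj : LipschitzWith (2 * K).toNNReal (lineProj f θ) := by
  have hK := nonneg_of_euclidean_lipschitz hlip
  refine LipschitzWith.of_dist_le_mul fun s s' => ?_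
  rw [Real.dist_eq, Real.dist_eq, Real.coe_toNNReal _ (by positivity), lineProj_eq, lineProj_eq,
    ← integral_sub (integrable_comp_planeRot hlip hsupp θ s)
      (integrable_comp_planeRot hlip hsupp θ s')]
  refine (norm_integral_le_of_eq_zero_off_Icc
    (g := fun t => f (planeRot θ (s, t)) - f (planeRot θ (s', t))) zero_le_one
    (fun t _ => abs_sub_comp_planeRot_le hlip θ s s' t) fun t ht => ?_).trans_eq (by ring)
  rw [comp_planeRot_eq_zero hsupp θ ht, comp_planeRot_eq_zero hsupp θ ht, sub_self]

lemma lipschitzWith_comp_planeRot_left (t : ℝ) :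
    LipschitzWith (Real.nnabs ((Icc (-1 : ℝ) 1).indicator (fun _ => K) t))
      fun s => f (planeRot θ (s, t)) := by
  by_cases ht : t ∈ Icc (-1 : ℝ) 1
  · rw [indicator_of_mem ht]
    refine LipschitzWith.of_dist_le_mul fun s s' => ?_
    rw [Real.dist_eq, Real.dist_eq, Real.coe_nnabs,
      abs_of_nonneg (nonneg_of_euclidean_lipschitz hlip)]
    exact abs_sub_comp_planeRot_le hlip θ s s' t
  · have hzero : (fun s => f (planeRot θ (s, t))) = fun _ => 0 :=
      funext fun s => comp_planeRot_eq_zero hsupp θ ht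
    rw [indicator_of_notMem ht, hzero, map_zero]
    exact LipschitzWith.const 0

lemma hasDerivAt_lineProj :
    ∀ᵐ s, HasDerivAt (lineProj f θ)
      (∫ t, fderiv ℝ f (planeRot θ (s, t)) (cos θ, sin θ)) s := by
  have hF'_meas (s : ℝ) :
      Measurable fun t => fderiv ℝ f (planeRot θ (s, t)) (cos θ, sin θ) :=
    (measurable_fderiv_apply_const ℝ f _).comp
      ((planeRot θ).continuous_of_finiteDimensional.measurable.comp measurable_prodMk_left)
  have hbound : Integrable ((Icc (-1 : ℝ) 1).indicator fun _ => K) :=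
    (integrableOn_const measure_Icc_lt_top.ne).integrable_indicator measurableSet_Icc
  filter_upwards [ae_ae_planeRot θ (lipschitzWith_of_euclidean_lipschitz hlip).ae_differentiableAt]
    with s hs
  refine (hasDerivAt_integral_of_dominated_loc_of_lip univ_mem
    (.of_forall fun s => (integrable_comp_planeRot hlip hsupp θ s).aestronglyMeasurable)
    (integrable_comp_planeRot hlip hsupp θ s) (hF'_meas s).aestronglyMeasurable
    (ae_of_all _ fun t => (lipschitzWith_comp_planeRot_left hlip hsupp θ t).lipschitzOnWith)
    hbound
    (hs.mono fun t ht => ht.hasFDerivAt.comp_hasDerivAt s (hasDerivAt_planeRot_left θ t s))).2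

lemma abs_integral_fderiv_le {s : ℝ} (hs : s ∈ Icc (-1 : ℝ) 1) :
    |∫ t, fderiv ℝ f (planeRot θ (s, t)) (cos θ, sin θ)| ≤ K * chordLength s := by
  have hs2 : s ^ 2 ≤ 1 := by nlinarith [hs.1, hs.2]
  refine (norm_integral_le_of_eq_zero_off_Icc
    (g := fun t => fderiv ℝ f (planeRot θ (s, t)) (cos θ, sin θ)) (sqrt_nonneg (1 - s ^ 2))
    (fun t _ => abs_fderiv_apply_le hlip _ _ (cos_sq_add_sin_sq θ)) fun t ht => ?_).trans_eq
    (by unfold chordLength; ring)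
  have hout : 1 < (planeRot θ (s, t)).1 ^ 2 + (planeRot θ (s, t)).2 ^ 2 := by
    rw [planeRot_normSq]
    exact one_lt_sq_add_sq_of_notMem_Icc (sqrt_nonneg _)
      (by rw [sq_sqrt (by linarith)]; linarith) ht
  rw [fderiv_eq_zero_of_one_lt hsupp hout, zero_apply]

end LineProjection

/-- If `f : ℝ² → ℝ` is `K`-Lipschitz and supported in the closed unit disk, then
`G = P_θ f` is Lipschitz on `[−1, 1]`, differentiable a.e. on `[−1, 1]` with
`G'(s) = ∫ ∇f(s(cos θ, sin θ) + t(−sin θ, cos θ)) · (cos θ, sin θ) dt`, and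
`∫_{-1}^1 |G'(s)|² ds ≤ 2π K²`. -/
theorem lineProj_deriv_L2_bound
    (f : ℝ × ℝ → ℝ) (K : ℝ)
    (hlip : ∀ x y : ℝ × ℝ,
      |f x - f y| ≤ K * Real.sqrt ((x.1 - y.1) ^ 2 + (x.2 - y.2) ^ 2))
    (hsupp : ∀ x : ℝ × ℝ, 1 < x.1 ^ 2 + x.2 ^ 2 → f x = 0)
    (θ : ℝ) :
    (∃ C : NNReal, LipschitzOnWith C (lineProj f θ) (Set.Icc (-1:ℝ) 1)) ∧
    (∀ᵐ s ∂(volume.restrict (Set.Icc (-1:ℝ) 1)),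
      HasDerivAt (lineProj f θ)
        (∫ t : ℝ, fderiv ℝ f (s * Real.cos θ - t * Real.sin θ, s * Real.sin θ + t * Real.cos θ)
          (Real.cos θ, Real.sin θ)) s) ∧
    ∫ s in (-1:ℝ)..1,
        (∫ t : ℝ, fderiv ℝ f (s * Real.cos θ - t * Real.sin θ, s * Real.sin θ + t * Real.cos θ)
          (Real.cos θ, Real.sin θ)) ^ 2
      ≤ 2 * π * K ^ 2 := by
  refine ⟨⟨_, (lipschitzWith_lineProj hlip hsupp θ).lipschitzOnWith⟩,
    ae_restrict_of_ae (hasDerivAt_lineProj hlip hsupp θ), ?_⟩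
  calc _ ≤ K ^ 2 * (16 / 3) :=
        integral_sq_le_of_abs_le_mul_chordLength fun s hs => abs_integral_fderiv_le hlip hsupp θ hs
    _ ≤ 2 * π * K ^ 2 := by nlinarith [pi_gt_three, sq_nonneg K]
end

section
/- Let u, ũ be probability densities on [−1, 1] and fix an integer L ≥ 1 with h = 2/L and grid points t_j = −1 + jh for j = 0, …, L. Suppose u and ũ assign the same mass to each cell: ∫_{t_j}^{t_{j+1}} u(s) ds = ∫_{t_j}^{t_{j+1}} ũ(s) ds for all j = 0, …, L−1. Then their quantile functions satisfy |Q_u(z) − Q_ũ(z)| ≤ h for all z ∈ (0, 1), and consequently the 1-D 2-Wasserstein distance satisfies d_{W2}(u, ũ) ≤ h. -/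
open MeasureTheory Real Set

/-!
Both CDFs are integrals of the densities from `-1`, so equal cell masses make them agree at
every grid point `-1 + j h`, `j ∈ ℤ` (below `-1` both vanish, beyond `1` both equal the total
mass). Given `z`, the first grid point `p` strictly above `Q_ũ(z)` satisfies `p ≤ Q_ũ(z) + h` and
`F_u(p) = F_ũ(p) ≥ z`, so `Q_u(z) ≤ p ≤ Q_ũ(z) + h`; by symmetry `|Q_u(z) − Q_ũ(z)| ≤ h`, and
integrating the squared bound over `(0, 1)` gives `d_{W2}(u, ũ) ≤ h`.
-/

section Cdf

variable {u : ℝ → ℝ} {a b t z : ℝ}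

theorem integrable_of_intervalIntegral_ne_zero (hab : a ≤ b)
    (hsupp : ∀ x ∉ Icc a b, u x = 0) (hne : ∫ x in a..b, u x ≠ 0) : Integrable u := by
  have hint : IntervalIntegrable u volume a b := by
    by_contra hnot
    exact hne (intervalIntegral.integral_undef hnot)
  exact ((intervalIntegrable_iff_integrableOn_Icc_of_le hab).1 hint)
    |>.integrable_of_forall_notMem_eq_zero hsupp

theorem monotone_cdfOf (hu : Integrable u) (hnonneg : ∀ x, 0 ≤ u x) : Monotone (cdfOf u) :=
  fun _ _ hst => setIntegral_mono_set hu.integrableOn (.of_forall hnonneg)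
    (Iic_subset_Iic.2 hst).eventuallyLE

theorem cdfOf_eq_zero_of_le (hsupp : ∀ x ∉ Icc a b, u x = 0) (ht : t ≤ a) : cdfOf u t = 0 := by
  rw [cdfOf, integral_Iic_eq_integral_Iio]
  exact setIntegral_eq_zero_of_forall_eq_zero fun x hx =>
    hsupp x fun hx' => (hx.out.trans_le (ht.trans hx'.1)).false

theorem cdfOf_eq_intervalIntegral (hu : Integrable u) (hsupp : ∀ x ∉ Icc a b, u x = 0)
    (ht : a ≤ t) : cdfOf u t = ∫ x in a..t, u x := by
  rw [intervalIntegral.integral_of_le ht, ← zero_add (∫ x in Ioc a t, u x),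
    ← cdfOf_eq_zero_of_le hsupp le_rfl, cdfOf, cdfOf, ← setIntegral_union (Iic_disjoint_Ioc le_rfl)
    measurableSet_Ioc hu.integrableOn hu.integrableOn, Iic_union_Ioc_eq_Iic ht]

theorem cdfOf_eq_intervalIntegral_of_ge (hab : a ≤ b) (hsupp : ∀ x ∉ Icc a b, u x = 0) (ht : b ≤ t) :
    cdfOf u t = ∫ x in a..b, u x := by
  have hsupp' : ∀ x ∉ Iic t, u x = 0 := fun x hx =>
    hsupp x fun hx' => hx (hx'.2.trans ht)
  rw [cdfOf, setIntegral_eq_integral_of_forall_compl_eq_zero hsupp',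
    intervalIntegral.integral_of_le hab, ← integral_Icc_eq_integral_Ioc,
    setIntegral_eq_integral_of_forall_compl_eq_zero hsupp]

theorem bddBelow_setOf_le_cdfOf (hsupp : ∀ x ∉ Icc a b, u x = 0)
    (hz : 0 < z) : BddBelow {t | z ≤ cdfOf u t} :=
  ⟨a, fun _ ht => le_of_not_gt fun hta =>
    hz.not_ge (cdfOf_eq_zero_of_le hsupp hta.le ▸ ht.out)⟩

theorem nonempty_setOf_le_cdfOf (hab : a ≤ b)
    (hsupp : ∀ x ∉ Icc a b, u x = 0) (hz : z ≤ ∫ x in a..b, u x) :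
    {t | z ≤ cdfOf u t}.Nonempty :=
  ⟨b, show z ≤ cdfOf u b by rwa [cdfOf_eq_intervalIntegral_of_ge hab hsupp le_rfl]⟩

end Cdf

section Grid

variable {u v : ℝ → ℝ} {a b h : ℝ}

theorem cdfOf_add_mul_eq_sum (hu : Integrable u) (hsupp : ∀ x ∉ Icc a b, u x = 0)
    (hh : 0 ≤ h) (n : ℕ) :
    cdfOf u (a + n * h) = ∑ k ∈ Finset.range n, ∫ x in (a + k * h)..(a + (k + 1) * h), u x := by
  have hsum := intervalIntegral.sum_integral_adjacent_intervals (a := fun k : ℕ => a + k * h)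
    (n := n) fun k _ => hu.intervalIntegrable
  push_cast at hsum
  rw [hsum, zero_mul, add_zero,
    cdfOf_eq_intervalIntegral hu hsupp (le_add_of_nonneg_right (by positivity))]

theorem cdfOf_eq_cdfOf_of_cell_integral_eq {L : ℕ} (hu : Integrable u) (hv : Integrable v)
    (husupp : ∀ x ∉ Icc a b, u x = 0) (hvsupp : ∀ x ∉ Icc a b, v x = 0)
    (hh : 0 ≤ h) (hLh : a + L * h = b)
    (hmass : ∀ j : ℕ, j < L →
      ∫ x in (a + j * h)..(a + (j + 1) * h), u x = ∫ x in (a + j * h)..(a + (j + 1) * h), v x)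
    (j : ℤ) : cdfOf u (a + j * h) = cdfOf v (a + j * h) := by
  have hcells : ∀ n ≤ L, cdfOf u (a + n * h) = cdfOf v (a + n * h) := fun n hn => by
    rw [cdfOf_add_mul_eq_sum hu husupp hh, cdfOf_add_mul_eq_sum hv hvsupp hh]
    exact Finset.sum_congr rfl fun k hk => hmass k ((Finset.mem_range.1 hk).trans_le hn)
  rcases le_or_gt j 0 with hj | hj
  · have hle : a + j * h ≤ a :=
      add_le_of_nonpos_right (mul_nonpos_of_nonpos_of_nonneg (by exact_mod_cast hj) hh)
    rw [cdfOf_eq_zero_of_le husupp hle, cdfOf_eq_zero_of_le hvsupp hle]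
  lift j to ℕ using hj.le
  push_cast
  rcases le_total j L with hjL | hLj
  · exact hcells j hjL
  have hab : a ≤ b := hLh ▸ le_add_of_nonneg_right (by positivity)
  have hbj : b ≤ a + j * h := hLh ▸ by gcongr
  rw [cdfOf_eq_intervalIntegral_of_ge hab husupp hbj, cdfOf_eq_intervalIntegral_of_ge hab hvsupp hbj,
    ← cdfOf_eq_intervalIntegral_of_ge hab husupp le_rfl, ← cdfOf_eq_intervalIntegral_of_ge hab hvsupp le_rfl, ← hLh]
  exact hcells L le_rfl

end Grid

section Quantile

variable {u v : ℝ → ℝ} {c h z : ℝ}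

theorem quantileOf_le_quantileOf_add_of_eq_on_grid (hh : 0 < h) (hv : Monotone (cdfOf v))
    (hgrid : ∀ j : ℤ, cdfOf u (c + j * h) = cdfOf v (c + j * h))
    (hu_bdd : BddBelow {t | z ≤ cdfOf u t}) (hv_ne : {t | z ≤ cdfOf v t}.Nonempty) :
    quantileOf u z ≤ quantileOf v z + h := by
  obtain ⟨j, hj, -⟩ := existsUnique_add_zsmul_mem_Ioc hh c (quantileOf v z)
  rw [zsmul_eq_mul] at hj
  obtain ⟨s, hs, hsj⟩ := exists_lt_of_csInf_lt hv_ne hj.1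
  have hz : z ≤ cdfOf u (c + j * h) := (hgrid j).symm ▸ hs.out.trans (hv hsj.le)
  exact (csInf_le hu_bdd hz).trans hj.2

theorem abs_quantileOf_sub_le_of_eq_on_grid (hh : 0 < h)
    (hu : Monotone (cdfOf u)) (hv : Monotone (cdfOf v))
    (hgrid : ∀ j : ℤ, cdfOf u (c + j * h) = cdfOf v (c + j * h))
    (hu_bdd : BddBelow {t | z ≤ cdfOf u t}) (hv_bdd : BddBelow {t | z ≤ cdfOf v t})
    (hu_ne : {t | z ≤ cdfOf u t}.Nonempty) (hv_ne : {t | z ≤ cdfOf v t}.Nonempty) :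
    |quantileOf u z - quantileOf v z| ≤ h := by
  have := quantileOf_le_quantileOf_add_of_eq_on_grid hh hv hgrid hu_bdd hv_ne
  have := quantileOf_le_quantileOf_add_of_eq_on_grid hh hu (fun j => (hgrid j).symm) hv_bdd hu_ne
  exact abs_sub_le_iff.2 ⟨by linarith, by linarith⟩

end Quantile

theorem wasserstein_le_of_forall_abs_sub_le {p h : ℝ} {μ ν : ℝ → ℝ} (hp : 0 < p) (hh : 0 ≤ h)
    (hbound : ∀ z ∈ Ioo (0 : ℝ) 1, |quantileOf μ z - quantileOf ν z| ≤ h) :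
    wasserstein p μ ν ≤ h := by
  have hpow : wassersteinPow p μ ν ≤ h ^ p := by
    have := norm_setIntegral_le_of_norm_le_const (μ := volume) (s := Ioo (0 : ℝ) 1)
      (f := fun z => |quantileOf μ z - quantileOf ν z| ^ p) (C := h ^ p) (by simp) fun z hz => by
        rw [norm_of_nonneg (by positivity)]
        exact rpow_le_rpow (abs_nonneg _) (hbound z hz) hp.le
    simpa [wassersteinPow] using (le_abs_self _).trans this
  calc wasserstein p μ ν ≤ (h ^ p) ^ (1 / p) :=
        rpow_le_rpow (setIntegral_nonneg measurableSet_Ioo fun z _ => by positivity) hpow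
          (by positivity)
    _ = h := by rw [one_div, rpow_rpow_inv hh hp.ne']

/-- If two probability densities `u, ũ` on `[−1, 1]` assign the same mass to every cell
`[t_j, t_{j+1}]` of the uniform grid `t_j = −1 + jh`, `h = 2/L`, then their quantile functions
satisfy `|Q_u(z) − Q_ũ(z)| ≤ h` for all `z ∈ (0, 1)`, and hence `d_{W2}(u, ũ) ≤ h`. -/
theorem equal_cell_mass_w2_bound
    (u v : ℝ → ℝ) (L : ℕ) (hL : 1 ≤ L) (h : ℝ) (hh : h = 2 / L)
    (hunonneg : ∀ x, 0 ≤ u x) (hvnonneg : ∀ x, 0 ≤ v x)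
    (husupp : ∀ x, x ∉ Set.Icc (-1:ℝ) 1 → u x = 0)
    (hvsupp : ∀ x, x ∉ Set.Icc (-1:ℝ) 1 → v x = 0)
    (huint : ∫ x in (-1:ℝ)..1, u x = 1) (hvint : ∫ x in (-1:ℝ)..1, v x = 1)
    (hmass : ∀ j : ℕ, j < L →
      (∫ s in (-1 + j * h)..(-1 + (j + 1) * h), u s)
        = ∫ s in (-1 + j * h)..(-1 + (j + 1) * h), v s) :
    (∀ z ∈ Set.Ioo (0:ℝ) 1, |quantileOf u z - quantileOf v z| ≤ h) ∧
    wasserstein 2 u v ≤ h := by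
  have hL0 : (L : ℝ) ≠ 0 := by positivity
  have hpos : 0 < h := hh ▸ by positivity
  have hLh : -1 + L * h = 1 := by rw [hh]; field_simp; norm_num
  have hu := integrable_of_intervalIntegral_ne_zero (by norm_num) husupp (by rw [huint]; norm_num)
  have hv := integrable_of_intervalIntegral_ne_zero (by norm_num) hvsupp (by rw [hvint]; norm_num)
  have hgrid := cdfOf_eq_cdfOf_of_cell_integral_eq hu hv husupp hvsupp hpos.le hLh hmass
  have hquantile : ∀ z ∈ Ioo (0 : ℝ) 1, |quantileOf u z - quantileOf v z| ≤ h := fun z hz =>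
    abs_quantileOf_sub_le_of_eq_on_grid hpos (monotone_cdfOf hu hunonneg)
      (monotone_cdfOf hv hvnonneg) hgrid (bddBelow_setOf_le_cdfOf husupp hz.1)
      (bddBelow_setOf_le_cdfOf hvsupp hz.1)
      (nonempty_setOf_le_cdfOf (by norm_num) husupp (by rw [huint]; exact hz.2.le))
      (nonempty_setOf_le_cdfOf (by norm_num) hvsupp (by rw [hvint]; exact hz.2.le))
  exact ⟨hquantile, wasserstein_le_of_forall_abs_sub_le two_pos hpos.le hquantile⟩
end
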